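/- arXiv:1510.02762 — 3 statements merged into one kernel-verified Lean document; each statement's English description precedes it below -/
import Mathlib

section
/- Let h_1, …, h_{2kn} : [a,b] → ℝ^n be linearly independent solutions of the Jacobi equation, and let 𝒜(t) denote the 2kn × n matrix whose i-th row is h_i(t)ᵀ. Then for every t ∈ [a,b] the 2kn × (k+1)n juxtaposed matrix (𝒜(t) | 𝒜'(t) | ⋯ | 𝒜^{(k)}(t)) has rank (k+1)n; consequently the Jacobi curve ℓ(t) = column span of (𝒜(t) | ⋯ | 𝒜^{(k−1)}(t)) in Gr(kn, 2kn) has rank n (and in particular is never fanning when k > 1). -/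
open Matrix

/-- The momenta `p_j` of the `k`-th order quadratic Lagrangian determined by the
matrix coefficients `M`: `p_0 = M₀₀h + M₀₁h'`,
`p_j = M_jj h^{(j)} + M_{(j−1)j}ᵀ h^{(j−1)} + M_{j(j+1)} h^{(j+1)}` for `1 ≤ j ≤ k−1`,
and `p_k = M_kk h^{(k)} + M_{(k−1)k}ᵀ h^{(k−1)}`. -/
noncomputable def pMom (n k : ℕ) (M : ℕ → ℕ → ℝ → Matrix (Fin n) (Fin n) ℝ)
    (h : ℝ → Fin n → ℝ) (j : ℕ) : ℝ → Fin n → ℝ := fun t =>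
  if j = 0 then M 0 0 t *ᵥ h t + M 0 1 t *ᵥ iteratedDeriv 1 h t
  else if j = k then
    M k k t *ᵥ iteratedDeriv k h t + (M (k - 1) k t)ᵀ *ᵥ iteratedDeriv (k - 1) h t
  else
    M j j t *ᵥ iteratedDeriv j h t + (M (j - 1) j t)ᵀ *ᵥ iteratedDeriv (j - 1) h t +
      M j (j + 1) t *ᵥ iteratedDeriv (j + 1) h t

/-- The Jacobi equation `∑_{j=0}^k (−1)^j (d/dt)^j p_j(t) = 0` on `[a,b]`. -/
noncomputable def IsJacobiSolution (n k : ℕ) (M : ℕ → ℕ → ℝ → Matrix (Fin n) (Fin n) ℝ)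
    (a b : ℝ) (h : ℝ → Fin n → ℝ) : Prop :=
  ContDiff ℝ (⊤ : ℕ∞) h ∧ ∀ t ∈ Set.Icc a b,
    ∑ j ∈ Finset.range (k + 1), ((-1 : ℝ) ^ j) • iteratedDeriv j (pMom n k M h j) t = 0

open Set Finset
open scoped ContDiff

set_option linter.unnecessarySimpa false
set_option linter.unusedVariables false

section Helpers
variable {F : Type*} [NormedAddCommGroup F] [NormedSpace ℝ F]

lemma contDiff_iteratedDeriv' (q : ℕ) {g : ℝ → F} (hg : ContDiff ℝ ∞ g) :
    ContDiff ℝ ∞ (iteratedDeriv q g) := by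
  induction q generalizing g with
  | zero => simpa [iteratedDeriv_zero] using hg
  | succ q ih => rw [iteratedDeriv_succ']; exact ih (contDiff_infty_iff_deriv.1 hg).2

lemma hasDerivAt_iteratedDeriv' (q : ℕ) {g : ℝ → F} (hg : ContDiff ℝ ∞ g) (t : ℝ) :
    HasDerivAt (iteratedDeriv q g) (iteratedDeriv (q + 1) g t) t := by
  rw [iteratedDeriv_succ]
  exact ((contDiff_iteratedDeriv' q hg).differentiable (by simp) t).hasDerivAt

lemma iteratedDeriv_add' (q : ℕ) {f g : ℝ → F} (hf : ContDiff ℝ ∞ f) (hg : ContDiff ℝ ∞ g) :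
    iteratedDeriv q (fun t => f t + g t) = fun t => iteratedDeriv q f t + iteratedDeriv q g t := by
  funext x
  rw [show (fun t => f t + g t) = f + g from rfl]
  simp only [← iteratedDerivWithin_univ]
  exact iteratedDerivWithin_add (Set.mem_univ x) uniqueDiffOn_univ
    (hf.contDiffWithinAt.of_le (by exact_mod_cast le_top)) (hg.contDiffWithinAt.of_le (by exact_mod_cast le_top))

lemma iteratedDeriv_smul' (q : ℕ) (c : ℝ) {f : ℝ → F} (hf : ContDiff ℝ ∞ f) :
    iteratedDeriv q (fun t => c • f t) = fun t => c • iteratedDeriv q f t := by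
  funext x
  rw [show (fun t => c • f t) = c • f from rfl]
  simp only [← iteratedDerivWithin_univ]
  exact iteratedDerivWithin_const_smul (Set.mem_univ x) uniqueDiffOn_univ c
    (hf.contDiffWithinAt.of_le (by exact_mod_cast le_top))

lemma iteratedDeriv_zero_fun (q : ℕ) : iteratedDeriv q (fun _ : ℝ => (0 : F)) = fun _ => 0 := by
  induction q with
  | zero => simp [iteratedDeriv_zero]
  | succ q ih =>
    rw [iteratedDeriv_succ', show deriv (fun _ : ℝ => (0 : F)) = fun _ => 0 from
      funext fun x => deriv_const x 0, ih]

lemma iteratedDeriv_sum' {ι : Type*} (q : ℕ) (s : Finset ι) (f : ι → ℝ → F)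
    (hf : ∀ i ∈ s, ContDiff ℝ ∞ (f i)) :
    iteratedDeriv q (fun t => ∑ i ∈ s, f i t) = fun t => ∑ i ∈ s, iteratedDeriv q (f i) t := by
  induction s using Finset.cons_induction with
  | empty => simpa using iteratedDeriv_zero_fun q
  | cons a s ha ih =>
    simp only [Finset.sum_cons]
    rw [iteratedDeriv_add' q (hf a (Finset.mem_cons_self a s))
      (ContDiff.sum fun i hi => hf i (Finset.mem_cons_of_mem hi)),
      ih fun i hi => hf i (Finset.mem_cons_of_mem hi)]

variable {n : ℕ}

lemma contDiff_mulVec {A : ℝ → Matrix (Fin n) (Fin n) ℝ}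
    (hA : ∀ i j, ContDiff ℝ ∞ fun t => A t i j) {g : ℝ → Fin n → ℝ} (hg : ContDiff ℝ ∞ g) :
    ContDiff ℝ ∞ fun t => A t *ᵥ g t := by
  rw [contDiff_pi]
  intro i
  have : (fun t => (A t *ᵥ g t) i) = fun t => ∑ j, A t i j * g t j := by
    funext t; simp [Matrix.mulVec, dotProduct]
  rw [this]
  exact ContDiff.sum fun j _ => (hA i j).mul (contDiff_pi.1 hg j)

lemma mulVec_sum' {m : Type*} (A : Matrix (Fin n) (Fin n) ℝ) (s : Finset m) (f : m → Fin n → ℝ) :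
    A *ᵥ (∑ i ∈ s, f i) = ∑ i ∈ s, A *ᵥ f i := by
  simp only [← Matrix.mulVecLin_apply, map_sum]

end Helpers

section Rep
variable {n : ℕ}

/-- Leibniz-type representation: the `r`-th derivative of `t ↦ A t *ᵥ h^{(q)} t` is a combination
of `h^{(s)}`, `s ≤ q + r`, with smooth matrix coefficients whose top coefficient is `A`. -/
lemma rep_mulVec {h : ℝ → Fin n → ℝ} (hh : ContDiff ℝ ∞ h)
    (A : ℝ → Matrix (Fin n) (Fin n) ℝ) (hA : ∀ i j, ContDiff ℝ ∞ fun t => A t i j)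
    (q r : ℕ) :
    ∃ C : ℕ → ℝ → Matrix (Fin n) (Fin n) ℝ,
      (∀ s i j, ContDiff ℝ ∞ fun t => C s t i j) ∧
      C (q + r) = A ∧ (∀ s, q + r < s → C s = 0) ∧
      ∀ t, iteratedDeriv r (fun u => A u *ᵥ iteratedDeriv q h u) t
          = ∑ s ∈ Finset.range (q + r + 1), C s t *ᵥ iteratedDeriv s h t := by
  induction r generalizing A with
  | zero =>
    refine ⟨fun s => if s = q then A else 0, ?_, by simp, ?_, ?_⟩
    · intro s i j
      by_cases hs : s = q
      · simpa [hs] using hA i j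
      · simpa [hs] using contDiff_const
    · intro s hs
      have : s ≠ q := by omega
      simp [this]
    · intro t
      rw [iteratedDeriv_zero]
      rw [Finset.sum_eq_single_of_mem q (Finset.self_mem_range_succ q)]
      · simp
      · intro s _ hs
        simp [hs]
  | succ r ih =>
    obtain ⟨C, hCsm, hCtop, hCzero, hCeq⟩ := ih A hA
    -- entrywise derivative of C s
    set C' : ℕ → ℝ → Matrix (Fin n) (Fin n) ℝ :=
      fun s t => Matrix.of fun i j => deriv (fun u => C s u i j) t with hC'
    have hC'sm : ∀ s i j, ContDiff ℝ ∞ fun t => C' s t i j := fun s i j =>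
      (contDiff_infty_iff_deriv.1 (hCsm s i j)).2
    have hC'zero : ∀ s, q + r < s → C' s = 0 := by
      intro s hs
      funext t
      ext i j
      have : (fun u => C s u i j) = fun _ => 0 := by rw [hCzero s hs]; simp
      simp [hC', this]
    refine ⟨fun s t => C' s t + (if s = 0 then 0 else C (s - 1) t), ?_, ?_, ?_, ?_⟩
    · intro s i j
      by_cases hs : s = 0
      · simpa [hs, Matrix.add_apply] using hC'sm s i j
      · simpa [hs, Matrix.add_apply] using (hC'sm s i j).add (hCsm (s - 1) i j)
    · funext t
      have h1 : q + (r + 1) ≠ 0 := by omega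
      have h2 : q + (r + 1) - 1 = q + r := by omega
      have h3 : C' (q + (r + 1)) = 0 := hC'zero _ (by omega)
      simp [h1, h2, h3, hCtop]
    · intro s hs
      have h1 : s ≠ 0 := by omega
      have h2 : C' s = 0 := hC'zero s (by omega)
      have h3 : C (s - 1) = 0 := hCzero _ (by omega)
      funext t
      simp [h1, h2, h3]
    · intro t
      -- the function at level r
      have hfun : iteratedDeriv r (fun u => A u *ᵥ iteratedDeriv q h u)
          = fun u => ∑ s ∈ Finset.range (q + r + 1), C s u *ᵥ iteratedDeriv s h u :=
        funext hCeq
      rw [iteratedDeriv_succ, hfun]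
      -- derivative of each summand
      have hterm : ∀ s : ℕ, HasDerivAt (fun u => C s u *ᵥ iteratedDeriv s h u)
          (C' s t *ᵥ iteratedDeriv s h t + C s t *ᵥ iteratedDeriv (s + 1) h t) t := by
        intro s
        rw [hasDerivAt_pi]
        intro i
        have hcomp : (fun u => (C s u *ᵥ iteratedDeriv s h u) i)
            = fun u => ∑ j, C s u i j * iteratedDeriv s h u j := by
          funext u; simp [Matrix.mulVec, dotProduct]
        rw [hcomp]
        have htarget : (C' s t *ᵥ iteratedDeriv s h t + C s t *ᵥ iteratedDeriv (s + 1) h t) i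
            = ∑ j, (deriv (fun u => C s u i j) t * iteratedDeriv s h t j
                + C s t i j * iteratedDeriv (s + 1) h t j) := by
          simp [Matrix.mulVec, dotProduct, Finset.sum_add_distrib, hC']
        rw [htarget]
        refine HasDerivAt.fun_sum fun j _ => ?_
        have hC1 : HasDerivAt (fun u => C s u i j) (deriv (fun u => C s u i j) t) t :=
          (((hCsm s i j).differentiable (by simp)) t).hasDerivAt
        have hh1 : HasDerivAt (fun u => iteratedDeriv s h u j)
            (iteratedDeriv (s + 1) h t j) t :=
          hasDerivAt_pi.1 (hasDerivAt_iteratedDeriv' s hh t) j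
        simpa using hC1.fun_mul hh1
      have hsum : HasDerivAt (fun u => ∑ s ∈ Finset.range (q + r + 1), C s u *ᵥ iteratedDeriv s h u)
          (∑ s ∈ Finset.range (q + r + 1),
            (C' s t *ᵥ iteratedDeriv s h t + C s t *ᵥ iteratedDeriv (s + 1) h t)) t :=
        HasDerivAt.fun_sum fun s _ => hterm s
      rw [hsum.deriv]
      -- rearrange the sums
      rw [Finset.sum_add_distrib]
      have e1 : ∑ s ∈ Finset.range (q + r + 1), C' s t *ᵥ iteratedDeriv s h t
          = ∑ s ∈ Finset.range (q + (r + 1) + 1), C' s t *ᵥ iteratedDeriv s h t := by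
        rw [show q + (r + 1) + 1 = (q + r + 1) + 1 from by omega]
        conv_rhs => rw [Finset.sum_range_succ]
        rw [hC'zero (q + r + 1) (by omega)]
        simp
      have e2 : ∑ s ∈ Finset.range (q + r + 1), C s t *ᵥ iteratedDeriv (s + 1) h t
          = ∑ s ∈ Finset.range (q + (r + 1) + 1),
              (if s = 0 then (0 : Matrix (Fin n) (Fin n) ℝ) else C (s - 1) t)
                *ᵥ iteratedDeriv s h t := by
        rw [show q + (r + 1) + 1 = (q + r + 1) + 1 from by omega]
        conv_rhs => rw [Finset.sum_range_succ']
        simp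
      rw [e1, e2, ← Finset.sum_add_distrib]
      exact Finset.sum_congr rfl fun s _ => by rw [Matrix.add_mulVec]

end Rep

section Rep2
variable {n : ℕ}

lemma rep_pad {h : ℝ → Fin n → ℝ} (hh : ContDiff ℝ ∞ h)
    (A : ℝ → Matrix (Fin n) (Fin n) ℝ) (hA : ∀ i j, ContDiff ℝ ∞ fun t => A t i j)
    (q r m : ℕ) (hm : q + r ≤ m) :
    ∃ C : ℕ → ℝ → Matrix (Fin n) (Fin n) ℝ,
      (∀ s i j, ContDiff ℝ ∞ fun t => C s t i j) ∧
      C m = (if q + r = m then A else 0) ∧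
      ∀ t, iteratedDeriv r (fun u => A u *ᵥ iteratedDeriv q h u) t
          = ∑ s ∈ Finset.range (m + 1), C s t *ᵥ iteratedDeriv s h t := by
  obtain ⟨C, h1, h2, h3, h4⟩ := rep_mulVec hh A hA q r
  refine ⟨C, h1, ?_, fun t => ?_⟩
  · rcases eq_or_lt_of_le hm with he | hl
    · rw [if_pos he, ← he, h2]
    · rw [if_neg hl.ne, h3 m hl]
  · rw [h4 t]
    refine Finset.sum_subset (Finset.range_subset_range.2 (Nat.succ_le_succ hm)) ?_
    intro x hx hnx
    rw [h3 x (by simp only [Finset.mem_range] at hx hnx; omega)]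
    simp

lemma pMom_rep {k : ℕ} (hk : 1 ≤ k) (M : ℕ → ℕ → ℝ → Matrix (Fin n) (Fin n) ℝ)
    (hM : ∀ i j r c, ContDiff ℝ ∞ fun t => M i j t r c)
    {h : ℝ → Fin n → ℝ} (hh : ContDiff ℝ ∞ h) (j : ℕ) (hj : j ≤ k) :
    ∃ C : ℕ → ℝ → Matrix (Fin n) (Fin n) ℝ,
      (∀ s i l, ContDiff ℝ ∞ fun t => C s t i l) ∧
      C (2 * k) = (if j = k then M k k else 0) ∧
      ∀ t, iteratedDeriv j (pMom n k M h j) t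
          = ∑ s ∈ Finset.range (2 * k + 1), C s t *ᵥ iteratedDeriv s h t := by
  have hsm : ∀ (q : ℕ) (A : ℝ → Matrix (Fin n) (Fin n) ℝ),
      (∀ i l, ContDiff ℝ ∞ fun t => A t i l) → ContDiff ℝ ∞ fun u => A u *ᵥ iteratedDeriv q h u :=
    fun q A hA => contDiff_mulVec hA (contDiff_iteratedDeriv' q hh)
  by_cases hj0 : j = 0
  · subst hj0
    have hkne : (0 : ℕ) ≠ k := by omega
    obtain ⟨C1, hC1sm, hC1top, hC1eq⟩ := rep_pad hh (M 0 0) (fun i l => hM 0 0 i l) 0 0 (2 * k)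
      (by omega)
    obtain ⟨C2, hC2sm, hC2top, hC2eq⟩ := rep_pad hh (M 0 1) (fun i l => hM 0 1 i l) 1 0 (2 * k)
      (by omega)
    refine ⟨fun s t => C1 s t + C2 s t, fun s i l => by
      simpa [Matrix.add_apply] using (hC1sm s i l).add (hC2sm s i l), ?_, fun t => ?_⟩
    · funext t
      rw [if_neg hkne]
      have e1 : (0 : ℕ) + 0 ≠ 2 * k := by omega
      have e2 : (1 : ℕ) + 0 ≠ 2 * k := by omega
      simp only [congr_fun hC1top t, congr_fun hC2top t, if_neg e1, if_neg e2]
      simp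
    · have h1 := hC1eq t
      have h2 := hC2eq t
      rw [iteratedDeriv_zero] at h1 h2
      calc iteratedDeriv 0 (pMom n k M h 0) t
          = M 0 0 t *ᵥ iteratedDeriv 0 h t + M 0 1 t *ᵥ iteratedDeriv 1 h t := by
            rw [iteratedDeriv_zero]; simp [pMom, iteratedDeriv_zero]
        _ = ∑ s ∈ Finset.range (2 * k + 1), (C1 s t *ᵥ iteratedDeriv s h t
              + C2 s t *ᵥ iteratedDeriv s h t) := by
            rw [h1, h2, ← Finset.sum_add_distrib]
        _ = ∑ s ∈ Finset.range (2 * k + 1), (fun s t => C1 s t + C2 s t) s t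
              *ᵥ iteratedDeriv s h t :=
            Finset.sum_congr rfl fun s _ => (Matrix.add_mulVec _ _ _).symm
  · by_cases hjk : j = k
    · obtain rfl : k = j := hjk.symm
      obtain ⟨C1, hC1sm, hC1top, hC1eq⟩ := rep_pad hh (M k k) (fun i l => hM k k i l) k k (2 * k)
        (by omega)
      obtain ⟨C2, hC2sm, hC2top, hC2eq⟩ := rep_pad hh (fun t => (M (k - 1) k t)ᵀ)
        (fun i l => hM (k - 1) k l i) (k - 1) k (2 * k) (by omega)
      have hf1 : ContDiff ℝ ∞ fun u => M k k u *ᵥ iteratedDeriv k h u :=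
        hsm k (M k k) fun i l => hM k k i l
      have hf2 : ContDiff ℝ ∞ fun u => (M (k - 1) k u)ᵀ *ᵥ iteratedDeriv (k - 1) h u :=
        hsm (k - 1) (fun t => (M (k - 1) k t)ᵀ) fun i l => hM (k - 1) k l i
      refine ⟨fun s t => C1 s t + C2 s t, fun s i l => by
        simpa [Matrix.add_apply] using (hC1sm s i l).add (hC2sm s i l), ?_, fun t => ?_⟩
      · funext t
        rw [if_pos rfl]
        have e1 : k + k = 2 * k := by omega
        have e2 : k - 1 + k ≠ 2 * k := by omega
        simp only [congr_fun hC1top t, congr_fun hC2top t, if_pos e1, if_neg e2]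
        simp
      · have hpm : pMom n k M h k = fun u => M k k u *ᵥ iteratedDeriv k h u
            + (M (k - 1) k u)ᵀ *ᵥ iteratedDeriv (k - 1) h u := by
          funext u
          simp [pMom, hj0]
        have key : iteratedDeriv k (pMom n k M h k)
            = fun t => iteratedDeriv k (fun u => M k k u *ᵥ iteratedDeriv k h u) t
              + iteratedDeriv k (fun u => (M (k - 1) k u)ᵀ *ᵥ iteratedDeriv (k - 1) h u) t := by
          rw [hpm]; exact iteratedDeriv_add' k hf1 hf2
        calc iteratedDeriv k (pMom n k M h k) t
            = iteratedDeriv k (fun u => M k k u *ᵥ iteratedDeriv k h u) t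
              + iteratedDeriv k (fun u => (M (k - 1) k u)ᵀ *ᵥ iteratedDeriv (k - 1) h u) t :=
              congrFun key t
          _ = ∑ s ∈ Finset.range (2 * k + 1), (C1 s t *ᵥ iteratedDeriv s h t
                + C2 s t *ᵥ iteratedDeriv s h t) := by
              rw [hC1eq t, hC2eq t, ← Finset.sum_add_distrib]
          _ = ∑ s ∈ Finset.range (2 * k + 1), (fun s t => C1 s t + C2 s t) s t
                *ᵥ iteratedDeriv s h t :=
              Finset.sum_congr rfl fun s _ => (Matrix.add_mulVec _ _ _).symm
    · obtain ⟨C1, hC1sm, hC1top, hC1eq⟩ := rep_pad hh (M j j) (fun i l => hM j j i l) j j (2 * k)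
        (by omega)
      obtain ⟨C2, hC2sm, hC2top, hC2eq⟩ := rep_pad hh (fun t => (M (j - 1) j t)ᵀ)
        (fun i l => hM (j - 1) j l i) (j - 1) j (2 * k) (by omega)
      obtain ⟨C3, hC3sm, hC3top, hC3eq⟩ := rep_pad hh (M j (j + 1))
        (fun i l => hM j (j + 1) i l) (j + 1) j (2 * k) (by omega)
      have hf1 : ContDiff ℝ ∞ fun u => M j j u *ᵥ iteratedDeriv j h u :=
        hsm j (M j j) fun i l => hM j j i l
      have hf2 : ContDiff ℝ ∞ fun u => (M (j - 1) j u)ᵀ *ᵥ iteratedDeriv (j - 1) h u :=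
        hsm (j - 1) (fun t => (M (j - 1) j t)ᵀ) fun i l => hM (j - 1) j l i
      have hf3 : ContDiff ℝ ∞ fun u => M j (j + 1) u *ᵥ iteratedDeriv (j + 1) h u :=
        hsm (j + 1) (M j (j + 1)) fun i l => hM j (j + 1) i l
      refine ⟨fun s t => C1 s t + C2 s t + C3 s t, fun s i l => by
        simpa [Matrix.add_apply] using ((hC1sm s i l).add (hC2sm s i l)).add (hC3sm s i l),
        ?_, fun t => ?_⟩
      · funext t
        rw [if_neg hjk]
        have e1 : j + j ≠ 2 * k := by omega
        have e2 : j - 1 + j ≠ 2 * k := by omega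
        have e3 : j + 1 + j ≠ 2 * k := by omega
        simp only [congr_fun hC1top t, congr_fun hC2top t, congr_fun hC3top t,
          if_neg e1, if_neg e2, if_neg e3]
        simp
      · have hpm : pMom n k M h j = fun u => (M j j u *ᵥ iteratedDeriv j h u
            + (M (j - 1) j u)ᵀ *ᵥ iteratedDeriv (j - 1) h u)
            + M j (j + 1) u *ᵥ iteratedDeriv (j + 1) h u := by
          funext u
          simp [pMom, hj0, hjk]
        have key1 : iteratedDeriv j (pMom n k M h j)
            = fun t => iteratedDeriv j (fun u => M j j u *ᵥ iteratedDeriv j h u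
                + (M (j - 1) j u)ᵀ *ᵥ iteratedDeriv (j - 1) h u) t
              + iteratedDeriv j (fun u => M j (j + 1) u *ᵥ iteratedDeriv (j + 1) h u) t := by
          rw [hpm]; exact iteratedDeriv_add' j (hf1.add hf2) hf3
        have key2 : iteratedDeriv j (fun u => M j j u *ᵥ iteratedDeriv j h u
              + (M (j - 1) j u)ᵀ *ᵥ iteratedDeriv (j - 1) h u)
            = fun t => iteratedDeriv j (fun u => M j j u *ᵥ iteratedDeriv j h u) t
              + iteratedDeriv j (fun u => (M (j - 1) j u)ᵀ *ᵥ iteratedDeriv (j - 1) h u) t :=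
          iteratedDeriv_add' j hf1 hf2
        calc iteratedDeriv j (pMom n k M h j) t
            = iteratedDeriv j (fun u => M j j u *ᵥ iteratedDeriv j h u
                + (M (j - 1) j u)ᵀ *ᵥ iteratedDeriv (j - 1) h u) t
              + iteratedDeriv j (fun u => M j (j + 1) u *ᵥ iteratedDeriv (j + 1) h u) t :=
              congrFun key1 t
          _ = (iteratedDeriv j (fun u => M j j u *ᵥ iteratedDeriv j h u) t
                + iteratedDeriv j (fun u => (M (j - 1) j u)ᵀ *ᵥ iteratedDeriv (j - 1) h u) t)
              + iteratedDeriv j (fun u => M j (j + 1) u *ᵥ iteratedDeriv (j + 1) h u) t := by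
              rw [congrFun key2 t]
          _ = ∑ s ∈ Finset.range (2 * k + 1), (C1 s t *ᵥ iteratedDeriv s h t
                + C2 s t *ᵥ iteratedDeriv s h t + C3 s t *ᵥ iteratedDeriv s h t) := by
              rw [hC1eq t, hC2eq t, hC3eq t, ← Finset.sum_add_distrib, ← Finset.sum_add_distrib]
          _ = ∑ s ∈ Finset.range (2 * k + 1), (fun s t => C1 s t + C2 s t + C3 s t) s t
                *ᵥ iteratedDeriv s h t :=
              Finset.sum_congr rfl fun s _ => by rw [Matrix.add_mulVec, Matrix.add_mulVec]

end Rep2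

section NormalForm
variable {n : ℕ}

lemma sum_mulVec' {m : Type*} (s : Finset m) (A : m → Matrix (Fin n) (Fin n) ℝ)
    (v : Fin n → ℝ) : (∑ i ∈ s, A i) *ᵥ v = ∑ i ∈ s, A i *ᵥ v := by
  induction s using Finset.cons_induction with
  | empty => simp
  | cons a s ha ih => rw [Finset.sum_cons, Finset.sum_cons, Matrix.add_mulVec, ih]

lemma normalForm {k : ℕ} (hk : 1 ≤ k) (M : ℕ → ℕ → ℝ → Matrix (Fin n) (Fin n) ℝ)
    (hM : ∀ i j r c, ContDiff ℝ ∞ fun t => M i j t r c) (a b : ℝ)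
    (hMpos : ∀ t ∈ Set.Icc a b, (M k k t).PosDef)
    {h : ℝ → Fin n → ℝ} (hh : ContDiff ℝ ∞ h)
    (heq : ∀ t ∈ Set.Icc a b, ∑ j ∈ Finset.range (k + 1),
      ((-1 : ℝ) ^ j) • iteratedDeriv j (pMom n k M h j) t = 0) :
    ∃ Bc : ℕ → ℝ → Matrix (Fin n) (Fin n) ℝ,
      (∀ s i l, ContinuousOn (fun t => Bc s t i l) (Set.Icc a b)) ∧
      ∀ t ∈ Set.Icc a b, iteratedDeriv (2 * k) h t
        = ∑ s ∈ Finset.range (2 * k), Bc s t *ᵥ iteratedDeriv s h t := by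
  have hrep : ∀ j : ℕ, ∃ C : ℕ → ℝ → Matrix (Fin n) (Fin n) ℝ,
      j ≤ k → ((∀ s i l, ContDiff ℝ ∞ fun t => C s t i l) ∧
        C (2 * k) = (if j = k then M k k else 0) ∧
        ∀ t, iteratedDeriv j (pMom n k M h j) t
            = ∑ s ∈ Finset.range (2 * k + 1), C s t *ᵥ iteratedDeriv s h t) := by
    intro j
    by_cases hj : j ≤ k
    · obtain ⟨C, h1, h2, h3⟩ := pMom_rep hk M hM hh j hj
      exact ⟨C, fun _ => ⟨h1, h2, h3⟩⟩
    · exact ⟨fun _ _ => 0, fun hle => absurd hle hj⟩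
  choose C hC using hrep
  set Ct : ℕ → ℝ → Matrix (Fin n) (Fin n) ℝ :=
    fun s t => ∑ j ∈ Finset.range (k + 1), ((-1 : ℝ) ^ j) • C j s t with hCt
  have hjle : ∀ j ∈ Finset.range (k + 1), j ≤ k := fun j hj =>
    Nat.lt_succ_iff.1 (Finset.mem_range.1 hj)
  have hCtsm : ∀ s i l, ContDiff ℝ ∞ fun t => Ct s t i l := by
    intro s i l
    have e : (fun t => Ct s t i l)
        = fun t => ∑ j ∈ Finset.range (k + 1), ((-1 : ℝ) ^ j) * C j s t i l := by
      funext t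
      simp [hCt, Matrix.sum_apply, Matrix.smul_apply, smul_eq_mul]
    rw [e]
    exact ContDiff.sum fun j hj => contDiff_const.mul ((hC j (hjle j hj)).1 s i l)
  have hCttop : ∀ t, Ct (2 * k) t = ((-1 : ℝ) ^ k) • M k k t := by
    intro t
    have e : ∀ j ∈ Finset.range (k + 1), ((-1 : ℝ) ^ j) • C j (2 * k) t
        = ((-1 : ℝ) ^ j) • (if j = k then M k k t else 0) := by
      intro j hj
      rw [(hC j (hjle j hj)).2.1]
      congr 1
      by_cases hjk : j = k <;> simp [hjk]
    show (∑ j ∈ Finset.range (k + 1), ((-1 : ℝ)) ^ j • C j (2 * k) t)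
        = ((-1 : ℝ)) ^ k • M k k t
    rw [Finset.sum_congr rfl e]
    rw [Finset.sum_eq_single_of_mem k (Finset.self_mem_range_succ k)]
    · simp
    · intro j _ hjk
      simp [hjk]
  have hmain : ∀ t ∈ Set.Icc a b,
      (((-1 : ℝ) ^ k) • M k k t) *ᵥ iteratedDeriv (2 * k) h t
        + ∑ s ∈ Finset.range (2 * k), Ct s t *ᵥ iteratedDeriv s h t = 0 := by
    intro t ht
    have h0 := heq t ht
    have e1 : ∀ j ∈ Finset.range (k + 1), ((-1 : ℝ) ^ j) • iteratedDeriv j (pMom n k M h j) t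
        = ∑ s ∈ Finset.range (2 * k + 1),
            (((-1 : ℝ) ^ j) • C j s t) *ᵥ iteratedDeriv s h t := by
      intro j hj
      rw [(hC j (hjle j hj)).2.2 t, Finset.smul_sum]
      exact Finset.sum_congr rfl fun s _ => (Matrix.smul_mulVec _ _ _).symm
    rw [Finset.sum_congr rfl e1, Finset.sum_comm] at h0
    have e2 : ∀ s ∈ Finset.range (2 * k + 1),
        ∑ j ∈ Finset.range (k + 1), (((-1 : ℝ) ^ j) • C j s t) *ᵥ iteratedDeriv s h t
          = Ct s t *ᵥ iteratedDeriv s h t := by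
      intro s _
      exact (sum_mulVec' _ _ _).symm
    rw [Finset.sum_congr rfl e2, Finset.sum_range_succ, hCttop t, add_comm] at h0
    exact h0
  have hone : ∀ x : Fin n → ℝ,
      ((-1 : ℝ) ^ (k + 1)) • (-(((-1 : ℝ) ^ k) • x)) = x := by
    intro x
    rw [← neg_smul, smul_smul]
    have : ((-1 : ℝ) ^ (k + 1)) * (-(-1 : ℝ) ^ k) = 1 := by
      rw [pow_succ]
      have : ((-1 : ℝ) ^ k) * (-1) * (-(-1 : ℝ) ^ k) = ((-1 : ℝ) ^ k) * ((-1 : ℝ) ^ k) := by ring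
      rw [this, ← pow_add]
      exact Even.neg_one_pow ⟨k, by ring⟩
    rw [this, one_smul]
  refine ⟨fun s t => ((-1 : ℝ) ^ (k + 1)) • ((M k k t)⁻¹ * Ct s t), ?_, ?_⟩
  · -- continuity
    have hMc : Continuous fun t => M k k t :=
      continuous_matrix fun i l => (hM k k i l).continuous
    have hdet : Continuous fun t => (M k k t).det := hMc.matrix_det
    have hadj : Continuous fun t => (M k k t).adjugate := hMc.matrix_adjugate
    have hdetne : ∀ t ∈ Set.Icc a b, (M k k t).det ≠ 0 := fun t ht => (hMpos t ht).det_pos.ne'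
    have hinvent : ∀ i l, ContinuousOn (fun t => (M k k t)⁻¹ i l) (Set.Icc a b) := by
      intro i l
      have e : ∀ t ∈ Set.Icc a b,
          ((M k k t).det)⁻¹ * (M k k t).adjugate i l = (M k k t)⁻¹ i l := by
        intro t ht
        rw [Matrix.inv_def, Matrix.smul_apply, smul_eq_mul, Ring.inverse_eq_inv]
      refine ContinuousOn.congr ?_ fun t ht => (e t ht).symm
      exact ((hdet.continuousOn).inv₀ hdetne).mul
        (((continuous_apply l).comp ((continuous_apply i).comp hadj)).continuousOn)
    intro s i l
    have e : (fun t => (((-1 : ℝ) ^ (k + 1)) • ((M k k t)⁻¹ * Ct s t)) i l)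
        = fun t => ((-1 : ℝ) ^ (k + 1)) * ∑ m, (M k k t)⁻¹ i m * Ct s t m l := by
      funext t
      simp [Matrix.smul_apply, Matrix.mul_apply, smul_eq_mul]
    rw [e]
    exact continuousOn_const.mul (continuousOn_finset_sum _ fun m _ =>
      (hinvent i m).mul ((hCtsm s m l).continuous.continuousOn))
  · intro t ht
    have hDet : IsUnit (M k k t).det := isUnit_iff_ne_zero.2 (hMpos t ht).det_pos.ne'
    have hinv : (M k k t)⁻¹ * M k k t = 1 := Matrix.nonsing_inv_mul _ hDet
    have h0 := hmain t ht
    have hEq : ∑ s ∈ Finset.range (2 * k), Ct s t *ᵥ iteratedDeriv s h t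
        = -((((-1 : ℝ) ^ k) • M k k t) *ᵥ iteratedDeriv (2 * k) h t) :=
      (neg_eq_of_add_eq_zero_right h0).symm
    have hsc : ((-1 : ℝ) ^ (k + 1)) * (-(-1 : ℝ) ^ k) = 1 := by
      rw [pow_succ]
      have e : ((-1 : ℝ) ^ k) * (-1) * (-(-1 : ℝ) ^ k) = ((-1 : ℝ) ^ k) * ((-1 : ℝ) ^ k) := by
        ring
      rw [e, ← pow_add]
      exact Even.neg_one_pow ⟨k, by ring⟩
    have hx : ∀ x : Fin n → ℝ,
        ((-1 : ℝ) ^ (k + 1)) • ((M k k t)⁻¹ *ᵥ (-((((-1 : ℝ) ^ k) • M k k t) *ᵥ x))) = x := by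
      intro x
      rw [Matrix.smul_mulVec, ← neg_smul, Matrix.mulVec_smul,
        Matrix.mulVec_mulVec, hinv, Matrix.one_mulVec, smul_smul, hsc, one_smul]
    calc iteratedDeriv (2 * k) h t
        = ((-1 : ℝ) ^ (k + 1)) • ((M k k t)⁻¹ *ᵥ
            (-((((-1 : ℝ) ^ k) • M k k t) *ᵥ iteratedDeriv (2 * k) h t))) :=
          (hx _).symm
      _ = ((-1 : ℝ) ^ (k + 1)) • ((M k k t)⁻¹ *ᵥ
            (∑ s ∈ Finset.range (2 * k), Ct s t *ᵥ iteratedDeriv s h t)) := by rw [hEq]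
      _ = ∑ s ∈ Finset.range (2 * k),
            (((-1 : ℝ) ^ (k + 1)) • ((M k k t)⁻¹ * Ct s t)) *ᵥ iteratedDeriv s h t := by
          rw [mulVec_sum', Finset.smul_sum]
          exact Finset.sum_congr rfl fun s _ => by
            rw [Matrix.mulVec_mulVec, Matrix.smul_mulVec]

end NormalForm

section Vanish
variable {n : ℕ}

lemma jacobi_vanish {k : ℕ} (hk : 1 ≤ k) (M : ℕ → ℕ → ℝ → Matrix (Fin n) (Fin n) ℝ)
    (hM : ∀ i j r c, ContDiff ℝ ∞ fun t => M i j t r c) (a b : ℝ) (hab : a ≤ b)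
    (hMpos : ∀ t ∈ Set.Icc a b, (M k k t).PosDef)
    {h : ℝ → Fin n → ℝ} (hh : ContDiff ℝ ∞ h)
    (heq : ∀ t ∈ Set.Icc a b, ∑ j ∈ Finset.range (k + 1),
      ((-1 : ℝ) ^ j) • iteratedDeriv j (pMom n k M h j) t = 0)
    (t₀ : ℝ) (ht₀ : t₀ ∈ Set.Icc a b)
    (hzero : ∀ m, m < 2 * k → iteratedDeriv m h t₀ = 0) :
    ∀ t ∈ Set.Icc a b, h t = 0 := by
  obtain ⟨Bc, hBcont, hode⟩ := normalForm hk M hM a b hMpos hh heq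
  -- clamp to the interval
  set π : ℝ → ℝ := fun t => max a (min b t) with hπ
  have hπmem : ∀ t, π t ∈ Set.Icc a b := fun t =>
    ⟨le_max_left _ _, max_le hab (min_le_left _ _)⟩
  have hπid : ∀ t ∈ Set.Icc a b, π t = t := by
    intro t ht
    rw [hπ]
    simp only [min_eq_right ht.2, max_eq_right ht.1]
  -- global bound for the clamped coefficients
  have hgc : ContinuousOn
      (fun t => fun p : Fin (2 * k) × Fin n × Fin n => Bc (p.1 : ℕ) t p.2.1 p.2.2)
      (Set.Icc a b) :=
    continuousOn_pi.2 fun p => hBcont (p.1 : ℕ) p.2.1 p.2.2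
  obtain ⟨Cb, hCb⟩ := isCompact_Icc.exists_bound_of_continuousOn hgc
  have hCb0 : 0 ≤ Cb := le_trans (norm_nonneg _) (hCb a ⟨le_refl a, hab⟩)
  have hBb : ∀ (t : ℝ) (s : Fin (2 * k)) (i j : Fin n), |Bc (s : ℕ) (π t) i j| ≤ Cb := by
    intro t s i j
    calc |Bc (s : ℕ) (π t) i j|
        ≤ ‖fun p : Fin (2 * k) × Fin n × Fin n => Bc (p.1 : ℕ) (π t) p.2.1 p.2.2‖ := by
          have := norm_le_pi_norm
            (fun p : Fin (2 * k) × Fin n × Fin n => Bc (p.1 : ℕ) (π t) p.2.1 p.2.2) (s, i, j)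
          simpa [Real.norm_eq_abs] using this
      _ ≤ Cb := hCb (π t) (hπmem t)
  -- the first-order system
  set v : ℝ → (Fin (2 * k) × Fin n → ℝ) → (Fin (2 * k) × Fin n → ℝ) := fun t z p =>
    if hlt : ((p.1 : ℕ) + 1) < 2 * k then z (⟨(p.1 : ℕ) + 1, hlt⟩, p.2)
    else ∑ s : Fin (2 * k), ∑ j : Fin n, Bc (s : ℕ) (π t) p.2 j * z (s, j) with hv
  have hv0 : ∀ t, v t 0 = 0 := by
    intro t
    funext p
    by_cases hlt : ((p.1 : ℕ) + 1) < 2 * k <;> simp [hv, hlt]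
  -- Lipschitz constant
  set Kr : ℝ := max 1 (Cb * (2 * k * n)) with hKr
  have hKr1 : (1 : ℝ) ≤ Kr := le_max_left _ _
  have hKr0 : (0 : ℝ) ≤ Kr := le_trans zero_le_one hKr1
  set K : NNReal := Real.toNNReal Kr with hK
  have hKcoe : (K : ℝ) = Kr := Real.coe_toNNReal _ hKr0
  have hlip : ∀ t, LipschitzWith K (v t) := by
    intro t
    rw [lipschitzWith_iff_dist_le_mul]
    intro z w
    rw [dist_pi_le_iff (by positivity)]
    intro p
    by_cases hlt : ((p.1 : ℕ) + 1) < 2 * k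
    · have e : dist (v t z p) (v t w p)
          = dist (z (⟨(p.1 : ℕ) + 1, hlt⟩, p.2)) (w (⟨(p.1 : ℕ) + 1, hlt⟩, p.2)) := by
        simp [hv, hlt]
      rw [e]
      calc dist (z (⟨(p.1 : ℕ) + 1, hlt⟩, p.2)) (w (⟨(p.1 : ℕ) + 1, hlt⟩, p.2))
          ≤ dist z w := dist_le_pi_dist z w _
        _ = 1 * dist z w := (one_mul _).symm
        _ ≤ (K : ℝ) * dist z w := by
            have := dist_nonneg (x := z) (y := w)
            rw [hKcoe]
            nlinarith
    · have e : dist (v t z p) (v t w p)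
          = |∑ s : Fin (2 * k), ∑ j : Fin n, Bc (s : ℕ) (π t) p.2 j * (z (s, j) - w (s, j))| := by
        rw [Real.dist_eq]
        congr 1
        simp only [hv, dif_neg hlt]
        rw [← Finset.sum_sub_distrib]
        refine Finset.sum_congr rfl fun s _ => ?_
        rw [← Finset.sum_sub_distrib]
        refine Finset.sum_congr rfl fun j _ => ?_
        ring
      rw [e]
      have hbound : ∀ s : Fin (2 * k), ∀ j : Fin n,
          |Bc (s : ℕ) (π t) p.2 j * (z (s, j) - w (s, j))| ≤ Cb * dist z w := by
        intro s j
        rw [abs_mul]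
        refine mul_le_mul (hBb t s p.2 j) ?_ (abs_nonneg _) hCb0
        rw [← Real.dist_eq]
        exact dist_le_pi_dist z w (s, j)
      calc |∑ s : Fin (2 * k), ∑ j : Fin n, Bc (s : ℕ) (π t) p.2 j * (z (s, j) - w (s, j))|
          ≤ ∑ s : Fin (2 * k), |∑ j : Fin n, Bc (s : ℕ) (π t) p.2 j * (z (s, j) - w (s, j))| :=
            Finset.abs_sum_le_sum_abs _ _
        _ ≤ ∑ s : Fin (2 * k), ∑ j : Fin n,
              |Bc (s : ℕ) (π t) p.2 j * (z (s, j) - w (s, j))| :=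
            Finset.sum_le_sum fun s _ => Finset.abs_sum_le_sum_abs _ _
        _ ≤ ∑ _s : Fin (2 * k), ∑ _j : Fin n, Cb * dist z w :=
            Finset.sum_le_sum fun s _ => Finset.sum_le_sum fun j _ => hbound s j
        _ = Cb * (2 * k * n) * dist z w := by
            simp [Finset.sum_const, Finset.card_univ, nsmul_eq_mul]
            ring
        _ ≤ (K : ℝ) * dist z w := by
            rw [hKcoe]
            exact mul_le_mul_of_nonneg_right (le_max_right _ _) dist_nonneg
  -- the jet curve
  set y : ℝ → (Fin (2 * k) × Fin n → ℝ) := fun t p => iteratedDeriv (p.1 : ℕ) h t p.2 with hy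
  have hycont : Continuous y :=
    continuous_pi fun p =>
      (continuous_apply p.2).comp (contDiff_iteratedDeriv' (p.1 : ℕ) hh).continuous
  have hy' : ∀ t ∈ Set.Icc a b, HasDerivAt y (v t (y t)) t := by
    intro t ht
    rw [hasDerivAt_pi]
    intro p
    have hp : HasDerivAt (fun u => iteratedDeriv (p.1 : ℕ) h u p.2)
        (iteratedDeriv ((p.1 : ℕ) + 1) h t p.2) t :=
      hasDerivAt_pi.1 (hasDerivAt_iteratedDeriv' (p.1 : ℕ) hh t) p.2
    have hvp : v t (y t) p = iteratedDeriv ((p.1 : ℕ) + 1) h t p.2 := by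
      by_cases hlt : ((p.1 : ℕ) + 1) < 2 * k
      · simp [hv, hlt, hy]
      · have h2k : (p.1 : ℕ) + 1 = 2 * k := by
          have := p.1.isLt
          omega
        have e1 : v t (y t) p
            = ∑ s : Fin (2 * k), ∑ j : Fin n, Bc (s : ℕ) t p.2 j * iteratedDeriv (s : ℕ) h t j := by
          simp [hv, hlt, hy, hπid t ht]
        rw [e1, h2k, hode t ht]
        rw [Finset.sum_apply]
        rw [← Fin.sum_univ_eq_sum_range
          (fun s => (Bc s t *ᵥ iteratedDeriv s h t) p.2) (2 * k)]
        refine Finset.sum_congr rfl fun s _ => ?_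
        simp [Matrix.mulVec, dotProduct]
    rw [hvp]
    exact hp
  have hy0 : y t₀ = 0 := by
    funext p
    have := hzero (p.1 : ℕ) (by simpa using p.1.isLt)
    rw [hy]
    simp only [this]
    rfl
  -- uniqueness on both sides of t₀
  have hvlip : ∀ t : ℝ, LipschitzOnWith K (v t) (Set.univ) := fun t =>
    (hlip t).lipschitzOnWith
  have hzcurve : ∀ t : ℝ, HasDerivAt (fun _ : ℝ => (0 : Fin (2 * k) × Fin n → ℝ))
      (v t ((fun _ : ℝ => (0 : Fin (2 * k) × Fin n → ℝ)) t)) t := by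
    intro t
    rw [show v t ((fun _ : ℝ => (0 : Fin (2 * k) × Fin n → ℝ)) t) = 0 from hv0 t]
    exact hasDerivAt_const t 0
  have hyzero : ∀ t ∈ Set.Icc a b, y t = 0 := by
    have hleft : Set.EqOn y (fun _ => (0 : Fin (2 * k) × Fin n → ℝ)) (Set.Icc a t₀) := by
      refine ODE_solution_unique_of_mem_Icc_left (fun t _ => hvlip t)
        (hycont.continuousOn) ?_ (fun _ _ => trivial)
        continuousOn_const ?_ (fun _ _ => trivial) (by simpa using hy0)
      · intro t ht'
        have : t ∈ Set.Icc a b := ⟨le_of_lt ht'.1, le_trans ht'.2 ht₀.2⟩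
        exact (hy' t this).hasDerivWithinAt
      · intro t _
        exact (hzcurve t).hasDerivWithinAt
    have hright : Set.EqOn y (fun _ => (0 : Fin (2 * k) × Fin n → ℝ)) (Set.Icc t₀ b) := by
      refine ODE_solution_unique_of_mem_Icc_right (fun t _ => hvlip t)
        (hycont.continuousOn) ?_ (fun _ _ => trivial)
        continuousOn_const ?_ (fun _ _ => trivial) (by simpa using hy0)
      · intro t ht'
        have : t ∈ Set.Icc a b := ⟨le_trans ht₀.1 ht'.1, le_of_lt ht'.2⟩
        exact (hy' t this).hasDerivWithinAt
      · intro t _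
        exact (hzcurve t).hasDerivWithinAt
    intro t ht
    rcases le_total t t₀ with hle | hle
    · exact hleft ⟨ht.1, hle⟩
    · exact hright ⟨hle, ht.2⟩
  intro t ht
  funext j
  have h2k0 : 0 < 2 * k := by omega
  have := congr_fun (hyzero t ht) (⟨0, h2k0⟩, j)
  simpa [hy, iteratedDeriv_zero] using this

end Vanish

section Linear
variable {n : ℕ}

lemma pMom_smooth {k : ℕ} (hk : 1 ≤ k) (M : ℕ → ℕ → ℝ → Matrix (Fin n) (Fin n) ℝ)
    (hM : ∀ i j r c, ContDiff ℝ ∞ fun t => M i j t r c)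
    {h : ℝ → Fin n → ℝ} (hh : ContDiff ℝ ∞ h) (j : ℕ) :
    ContDiff ℝ ∞ (pMom n k M h j) := by
  have base : ∀ (q : ℕ) (A : ℝ → Matrix (Fin n) (Fin n) ℝ),
      (∀ i l, ContDiff ℝ ∞ fun t => A t i l) →
      ContDiff ℝ ∞ fun u => A u *ᵥ iteratedDeriv q h u :=
    fun q A hA => contDiff_mulVec hA (contDiff_iteratedDeriv' q hh)
  by_cases hj0 : j = 0
  · subst hj0
    have e : pMom n k M h 0 = fun t => M 0 0 t *ᵥ iteratedDeriv 0 h t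
        + M 0 1 t *ᵥ iteratedDeriv 1 h t := by
      funext u; simp [pMom, iteratedDeriv_zero]
    rw [e]
    exact (base 0 (M 0 0) fun i l => hM 0 0 i l).add (base 1 (M 0 1) fun i l => hM 0 1 i l)
  · by_cases hjk : j = k
    · have e : pMom n k M h j = fun u => M k k u *ᵥ iteratedDeriv k h u
          + (M (k - 1) k u)ᵀ *ᵥ iteratedDeriv (k - 1) h u := by
        have hk0 : k ≠ 0 := by omega
        funext u; simp [pMom, hj0, hjk, hk0]
      rw [e]
      exact (base k (M k k) fun i l => hM k k i l).add
        (base (k - 1) (fun t => (M (k - 1) k t)ᵀ) fun i l => hM (k - 1) k l i)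
    · have e : pMom n k M h j = fun u => (M j j u *ᵥ iteratedDeriv j h u
          + (M (j - 1) j u)ᵀ *ᵥ iteratedDeriv (j - 1) h u)
          + M j (j + 1) u *ᵥ iteratedDeriv (j + 1) h u := by
        funext u; simp [pMom, hj0, hjk]
      rw [e]
      exact ((base j (M j j) fun i l => hM j j i l).add
        (base (j - 1) (fun t => (M (j - 1) j t)ᵀ) fun i l => hM (j - 1) j l i)).add
        (base (j + 1) (M j (j + 1)) fun i l => hM j (j + 1) i l)

lemma jacobi_linear {k : ℕ} (hk : 1 ≤ k) (M : ℕ → ℕ → ℝ → Matrix (Fin n) (Fin n) ℝ)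
    (hM : ∀ i j r c, ContDiff ℝ ∞ fun t => M i j t r c)
    {ι : Type*} [Fintype ι] (σ : ι → ℝ → Fin n → ℝ) (hsm : ∀ i, ContDiff ℝ ∞ (σ i))
    (a b : ℝ)
    (hsol : ∀ i, ∀ t ∈ Set.Icc a b, ∑ j ∈ Finset.range (k + 1),
      ((-1 : ℝ) ^ j) • iteratedDeriv j (pMom n k M (σ i) j) t = 0)
    (c : ι → ℝ) :
    ∀ t ∈ Set.Icc a b, ∑ j ∈ Finset.range (k + 1),
      ((-1 : ℝ) ^ j) • iteratedDeriv j (pMom n k M (fun u => ∑ i, c i • σ i u) j) t = 0 := by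
  have hjet : ∀ (q : ℕ) (u : ℝ), iteratedDeriv q (fun u => ∑ i, c i • σ i u) u
      = ∑ i, c i • iteratedDeriv q (σ i) u := by
    intro q u
    rw [iteratedDeriv_sum' q Finset.univ (fun i u => c i • σ i u)
      (fun i _ => (hsm i).const_smul (c i))]
    exact Finset.sum_congr rfl fun i _ => by rw [iteratedDeriv_smul' q (c i) (hsm i)]
  have hplin : ∀ j, j ≤ k → pMom n k M (fun u => ∑ i, c i • σ i u) j
      = fun u => ∑ i, c i • pMom n k M (σ i) j u := by
    intro j hj
    funext u
    by_cases hj0 : j = 0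
    · subst hj0
      simp only [pMom, eq_self_iff_true, if_true]
      rw [hjet 1 u, mulVec_sum', mulVec_sum']
      simp [Matrix.mulVec_smul, smul_add, Finset.sum_add_distrib]
    · by_cases hjk : j = k
      · simp only [pMom, if_neg hj0, if_pos hjk]
        rw [hjet k u, hjet (k - 1) u, mulVec_sum', mulVec_sum']
        simp [hj0, hjk, Matrix.mulVec_smul, smul_add, Finset.sum_add_distrib]
      · simp only [pMom, if_neg hj0, if_neg hjk]
        rw [hjet j u, hjet (j - 1) u, hjet (j + 1) u, mulVec_sum', mulVec_sum', mulVec_sum']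
        simp [hj0, hjk, Matrix.mulVec_smul, smul_add, Finset.sum_add_distrib]
  intro t ht
  have e1 : ∀ j ∈ Finset.range (k + 1),
      ((-1 : ℝ) ^ j) • iteratedDeriv j (pMom n k M (fun u => ∑ i, c i • σ i u) j) t
      = ∑ i, ((-1 : ℝ) ^ j) • (c i • iteratedDeriv j (pMom n k M (σ i) j) t) := by
    intro j hj
    have hjk : j ≤ k := Nat.lt_succ_iff.1 (Finset.mem_range.1 hj)
    rw [hplin j hjk, iteratedDeriv_sum' j Finset.univ (fun i u => c i • pMom n k M (σ i) j u)
      (fun i _ => (pMom_smooth hk M hM (hsm i) j).const_smul (c i)), Finset.smul_sum]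
    refine Finset.sum_congr rfl fun i _ => ?_
    rw [iteratedDeriv_smul' j (c i) (pMom_smooth hk M hM (hsm i) j)]
  rw [Finset.sum_congr rfl e1, Finset.sum_comm]
  have e2 : ∀ i : ι, ∑ j ∈ Finset.range (k + 1),
      ((-1 : ℝ) ^ j) • (c i • iteratedDeriv j (pMom n k M (σ i) j) t) = 0 := by
    intro i
    have e3 : ∀ j ∈ Finset.range (k + 1),
        ((-1 : ℝ) ^ j) • (c i • iteratedDeriv j (pMom n k M (σ i) j) t)
        = c i • (((-1 : ℝ) ^ j) • iteratedDeriv j (pMom n k M (σ i) j) t) :=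
      fun j _ => smul_comm _ _ _
    rw [Finset.sum_congr rfl e3, ← Finset.smul_sum, hsol i t ht, smul_zero]
  rw [Finset.sum_congr rfl fun i _ => e2 i]
  simp

end Linear

/-- for a fundamental system of `2kn` linearly independent solutions of
the Jacobi equation, arranged as the rows of the `2kn × n` frame `𝒜(t)`, the juxtaposed
matrix `(𝒜(t) | 𝒜'(t) | ⋯ | 𝒜^{(k)}(t))` has rank `(k+1)n`; consequently the Jacobi
curve `ℓ(t)` (spanned by the columns of `(𝒜(t) | ⋯ | 𝒜^{(k−1)}(t))`) has rank
`rank(frame | frame') − kn = n`. -/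
theorem statement_13 (n k : ℕ) (hn : 1 ≤ n) (hk : 1 ≤ k) (a b : ℝ) (hab : a < b)
    (M : ℕ → ℕ → ℝ → Matrix (Fin n) (Fin n) ℝ)
    (hMsmooth : ∀ i j r c, ContDiff ℝ (⊤ : ℕ∞) fun t => M i j t r c)
    (hMsymm : ∀ i, i ≤ k → ∀ t ∈ Set.Icc a b, (M i i t).IsSymm)
    (hMpos : ∀ t ∈ Set.Icc a b, (M k k t).PosDef)
    (σ : Fin (2 * k) × Fin n → ℝ → Fin n → ℝ)
    (hσsol : ∀ i, IsJacobiSolution n k M a b (σ i))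
    (hσli : LinearIndependent ℝ fun i => (Set.Icc a b).restrict (σ i)) :
    ∀ t ∈ Set.Icc a b,
      (Matrix.rank (Matrix.of fun (i : Fin (2 * k) × Fin n) (q : Fin (k + 1) × Fin n) =>
          iteratedDeriv (q.1 : ℕ) (σ i) t q.2) = (k + 1) * n) ∧
      (Matrix.rank (Matrix.of
          fun (i : Fin (2 * k) × Fin n) (q : (Fin k × Fin n) ⊕ (Fin k × Fin n)) =>
            Sum.elim (fun p : Fin k × Fin n => iteratedDeriv (p.1 : ℕ) (σ i) t p.2)
              (fun p : Fin k × Fin n => iteratedDeriv ((p.1 : ℕ) + 1) (σ i) t p.2) q)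
          - k * n = n) := by
  intro t ht
  have hM' : ∀ i j r c, ContDiff ℝ ∞ fun t => M i j t r c :=
    fun i j r c => (hMsmooth i j r c).of_le (by simp)
  have hsmσ : ∀ i, ContDiff ℝ ∞ (σ i) := fun i => (hσsol i).1.of_le (by simp)
  -- the square jet matrix
  set B : Matrix (Fin (2 * k) × Fin n) (Fin (2 * k) × Fin n) ℝ :=
    Matrix.of fun i q => iteratedDeriv (q.1 : ℕ) (σ i) t q.2 with hB
  -- rows of B are linearly independent (by uniqueness of the Jacobi equation)
  have hrows : LinearIndependent ℝ (fun i => B i) := by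
    rw [Fintype.linearIndependent_iff]
    intro c hc
    have hfeqn := jacobi_linear hk M hM' σ hsmσ a b (fun i => (hσsol i).2) c
    have hfsm : ContDiff ℝ ∞ fun u => ∑ i, c i • σ i u :=
      ContDiff.sum fun i _ => (hsmσ i).const_smul (c i)
    have hjet : ∀ (q : ℕ) (u : ℝ), iteratedDeriv q (fun u => ∑ i, c i • σ i u) u
        = ∑ i, c i • iteratedDeriv q (σ i) u := by
      intro q u
      rw [iteratedDeriv_sum' q Finset.univ (fun i u => c i • σ i u)
        (fun i _ => (hsmσ i).const_smul (c i))]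
      exact Finset.sum_congr rfl fun i _ => by rw [iteratedDeriv_smul' q (c i) (hsmσ i)]
    have hfz : ∀ m, m < 2 * k → iteratedDeriv m (fun u => ∑ i, c i • σ i u) t = 0 := by
      intro m hm
      rw [hjet m t]
      funext jj
      have := congr_fun hc (⟨m, hm⟩, jj)
      simpa [hB, Finset.sum_apply] using this
    have hzero := jacobi_vanish hk M hM' a b hab.le hMpos hfsm hfeqn t ht hfz
    have hcomb : ∑ i, c i • (Set.Icc a b).restrict (σ i) = 0 := by
      funext x
      have hz := hzero x.1 x.2
      have : (∑ i, c i • (Set.Icc a b).restrict (σ i)) x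
          = ∑ i, c i • σ i x.1 := by
        simp [Set.restrict, Finset.sum_apply]
      rw [this, hz]
      simp
    exact Fintype.linearIndependent_iff.1 hσli c hcomb
  -- B is invertible, hence its columns are linearly independent
  have hBunit : IsUnit B :=
    vecMul_injective_iff_isUnit.1 (Matrix.vecMul_injective_iff.2 hrows)
  have hcols : LinearIndependent ℝ (fun q => Bᵀ q) :=
    Matrix.mulVec_injective_iff.1 (mulVec_injective_iff_isUnit.2 hBunit)
  -- the (k+1)n columns of the first matrix are columns of B
  have hkk : ∀ m : Fin (k + 1), (m : ℕ) < 2 * k := fun m => by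
    have := m.isLt; omega
  set ι : Fin (k + 1) × Fin n → Fin (2 * k) × Fin n :=
    fun q => (⟨(q.1 : ℕ), hkk q.1⟩, q.2) with hι
  have hιinj : Function.Injective ι := by
    intro q q' hqq
    have e1 := congr_arg (fun p : Fin (2 * k) × Fin n => (p.1 : ℕ)) hqq
    have e2 := congr_arg (fun p : Fin (2 * k) × Fin n => p.2) hqq
    simp only [hι] at e1 e2
    exact Prod.ext (Fin.ext e1) e2
  set M1 : Matrix (Fin (2 * k) × Fin n) (Fin (k + 1) × Fin n) ℝ :=
    Matrix.of fun (i : Fin (2 * k) × Fin n) (q : Fin (k + 1) × Fin n) =>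
      iteratedDeriv (q.1 : ℕ) (σ i) t q.2 with hM1
  have hM1cols : (fun q => M1ᵀ q) = fun q => Bᵀ (ι q) := by
    funext q i
    simp [hM1, hB, hι, Matrix.transpose_apply]
  have hM1li : LinearIndependent ℝ (fun q => M1ᵀ q) := by
    rw [hM1cols]
    exact hcols.comp ι hιinj
  have hrank1 : M1.rank = (k + 1) * n := by
    rw [Matrix.rank_eq_finrank_span_cols, show Set.range M1.col = Set.range fun q => M1ᵀ q from rfl,
      finrank_span_eq_card hM1li]
    simp [Fintype.card_prod]
  refine ⟨hrank1, ?_⟩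
  -- the second matrix has the same column span
  set M2 : Matrix (Fin (2 * k) × Fin n) ((Fin k × Fin n) ⊕ (Fin k × Fin n)) ℝ :=
    Matrix.of
      (fun (i : Fin (2 * k) × Fin n) (q : (Fin k × Fin n) ⊕ (Fin k × Fin n)) =>
        Sum.elim (fun p : Fin k × Fin n => iteratedDeriv (p.1 : ℕ) (σ i) t p.2)
          (fun p : Fin k × Fin n => iteratedDeriv ((p.1 : ℕ) + 1) (σ i) t p.2) q) with hM2
  have hrange : Set.range M2ᵀ = Set.range M1ᵀ := by
    apply Set.Subset.antisymm
    · rintro _ ⟨q, rfl⟩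
      cases q with
      | inl p =>
        refine ⟨(⟨(p.1 : ℕ), by have := p.1.isLt; omega⟩, p.2), ?_⟩
        funext i
        simp [hM1, hM2, Matrix.transpose_apply]
      | inr p =>
        refine ⟨(⟨(p.1 : ℕ) + 1, by have := p.1.isLt; omega⟩, p.2), ?_⟩
        funext i
        simp [hM1, hM2, Matrix.transpose_apply]
    · rintro _ ⟨q, rfl⟩
      by_cases hq : (q.1 : ℕ) < k
      · refine ⟨Sum.inl (⟨(q.1 : ℕ), hq⟩, q.2), ?_⟩
        funext i
        simp [hM1, hM2, Matrix.transpose_apply]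
      · have hqk : (q.1 : ℕ) = k := by have := q.1.isLt; omega
        refine ⟨Sum.inr (⟨k - 1, by omega⟩, q.2), ?_⟩
        funext i
        show iteratedDeriv ((k - 1) + 1) (σ i) t q.2 = iteratedDeriv (q.1 : ℕ) (σ i) t q.2
        rw [show (q.1 : ℕ) = (k - 1) + 1 from by omega]
  have hrank2 : M2.rank = (k + 1) * n := by
    rw [Matrix.rank_eq_finrank_span_cols, show Set.range M2.col = Set.range M2ᵀ from rfl, hrange,
      show Set.range M1ᵀ = Set.range M1.col from rfl, ← Matrix.rank_eq_finrank_span_cols, hrank1]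
  rw [hrank2, show (k + 1) * n = k * n + n from by ring, Nat.add_sub_cancel_left]
end

section
/- Let σ_1, …, σ_{2k} : [a,b] → ℝ be linearly independent solutions of the Jacobi equation, and let 𝒜(t) be the 2k × k matrix with entries 𝒜(t)_{ij} = σ_i^{(j−1)}(t) for 1 ≤ i ≤ 2k and 1 ≤ j ≤ k. Then for every t ∈ [a,b] the 2k × (k+1) matrix with entries σ_i^{(j)}(t), 0 ≤ j ≤ k, has rank exactly k+1; consequently the Jacobi curve ℓ(t) = column span of 𝒜(t) in Gr(k, 2k) has rank one. -/
open Matrix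

/-- The scalar Jacobi (Euler–Lagrange) equation
`∑_{l=0}^k (−1)^l (d/dt)^l (P_l(t) h^{(l)}(t)) = 0` on `[a,b]`. -/
def IsJacobiSolution1D (k : ℕ) (P : ℕ → ℝ → ℝ) (a b : ℝ) (h : ℝ → ℝ) : Prop :=
  ContDiff ℝ (⊤ : ℕ∞) h ∧ ∀ t ∈ Set.Icc a b,
    ∑ l ∈ Finset.range (k + 1),
      (-1 : ℝ) ^ l * iteratedDeriv l (fun s => P l s * iteratedDeriv l h s) t = 0

open Finset
open scoped ContDiff

private lemma nat_lt_infty (j : ℕ) : (j : WithTop ℕ∞) < ∞ := by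
  exact_mod_cast ENat.coe_lt_top j

private lemma itd_comp (m l : ℕ) (h : ℝ → ℝ) :
    iteratedDeriv m (iteratedDeriv l h) = iteratedDeriv (m + l) h := by
  induction m with
  | zero => simp
  | succ m ih =>
      have e : m + 1 + l = m + l + 1 := by omega
      rw [e, iteratedDeriv_succ, iteratedDeriv_succ, ih]

private lemma contDiff_itd {h : ℝ → ℝ} (hh : ContDiff ℝ ∞ h) (l : ℕ) :
    ContDiff ℝ ∞ (iteratedDeriv l h) := by
  rw [iteratedDeriv_eq_iterate]; exact hh.iterate_deriv l

private lemma leibniz {f g : ℝ → ℝ} (hf : ContDiff ℝ ∞ f) (hg : ContDiff ℝ ∞ g) :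
    ∀ (n : ℕ) (t : ℝ), iteratedDeriv n (fun s => f s * g s) t
      = ∑ m ∈ range (n + 1),
          (n.choose m : ℝ) * iteratedDeriv (n - m) f t * iteratedDeriv m g t := by
  intro n
  induction n with
  | zero => intro t; simp
  | succ n ih =>
    intro t
    have hdf : ∀ j : ℕ, Differentiable ℝ (iteratedDeriv j f) :=
      fun j => hf.differentiable_iteratedDeriv j (nat_lt_infty j)
    have hdg : ∀ j : ℕ, Differentiable ℝ (iteratedDeriv j g) :=
      fun j => hg.differentiable_iteratedDeriv j (nat_lt_infty j)
    have hfun : iteratedDeriv n (fun s => f s * g s)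
        = fun s => ∑ m ∈ range (n + 1),
            (n.choose m : ℝ) * iteratedDeriv (n - m) f s * iteratedDeriv m g s := funext ih
    have hdterm : ∀ m : ℕ, DifferentiableAt ℝ
        (fun s => (n.choose m : ℝ) * iteratedDeriv (n - m) f s * iteratedDeriv m g s) t :=
      fun m => ((((hdf (n - m)).const_mul _).mul (hdg m)) t)
    have step : ∀ m : ℕ, deriv
        (fun s => (n.choose m : ℝ) * iteratedDeriv (n - m) f s * iteratedDeriv m g s) t
        = (n.choose m : ℝ) * (iteratedDeriv (n - m + 1) f t * iteratedDeriv m g t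
            + iteratedDeriv (n - m) f t * iteratedDeriv (m + 1) g t) := by
      intro m
      have h1 : (fun s => (n.choose m : ℝ) * iteratedDeriv (n - m) f s * iteratedDeriv m g s)
          = fun s => (n.choose m : ℝ) * (iteratedDeriv (n - m) f s * iteratedDeriv m g s) := by
        funext s; ring
      rw [h1, deriv_const_mul (d := fun s => iteratedDeriv (n - m) f s * iteratedDeriv m g s) _ (((hdf (n - m)).mul (hdg m)) t),
        deriv_fun_mul ((hdf (n - m)) t) ((hdg m) t), iteratedDeriv_succ, iteratedDeriv_succ]
    rw [iteratedDeriv_succ, hfun, deriv_fun_sum (fun m _ => hdterm m)]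
    have expand : ∑ m ∈ range (n + 1), deriv
        (fun s => (n.choose m : ℝ) * iteratedDeriv (n - m) f s * iteratedDeriv m g s) t
        = (∑ m ∈ range (n + 1),
            (n.choose m : ℝ) * iteratedDeriv (n - m + 1) f t * iteratedDeriv m g t)
          + ∑ m ∈ range (n + 1),
            (n.choose m : ℝ) * iteratedDeriv (n - m) f t * iteratedDeriv (m + 1) g t := by
      rw [← Finset.sum_add_distrib]
      exact Finset.sum_congr rfl fun m _ => by rw [step m]; ring
    rw [expand]
    have hA : (∑ m ∈ range (n + 1),
          (n.choose m : ℝ) * iteratedDeriv (n - m + 1) f t * iteratedDeriv m g t)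
        = (∑ m ∈ range n,
            (n.choose (m + 1) : ℝ) * iteratedDeriv (n - m) f t * iteratedDeriv (m + 1) g t)
          + iteratedDeriv (n + 1) f t * iteratedDeriv 0 g t := by
      rw [Finset.sum_range_succ']
      congr 1
      · exact Finset.sum_congr rfl fun m hm => by
          have : n - (m + 1) + 1 = n - m := by
            have := Finset.mem_range.mp hm; omega
          rw [this]
      · simp
    have hT : (∑ m ∈ range (n + 1 + 1),
          ((n + 1).choose m : ℝ) * iteratedDeriv (n + 1 - m) f t * iteratedDeriv m g t)
        = (∑ m ∈ range (n + 1),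
            ((n.choose m : ℝ) + (n.choose (m + 1) : ℝ))
              * iteratedDeriv (n - m) f t * iteratedDeriv (m + 1) g t)
          + iteratedDeriv (n + 1) f t * iteratedDeriv 0 g t := by
      rw [Finset.sum_range_succ']
      congr 1
      · exact Finset.sum_congr rfl fun m hm => by
          have h2 : n + 1 - (m + 1) = n - m := by omega
          rw [h2, Nat.choose_succ_succ]
          push_cast
          ring
      · simp
    rw [hT]
    have hA' : (∑ m ∈ range (n + 1),
          (n.choose (m + 1) : ℝ) * iteratedDeriv (n - m) f t * iteratedDeriv (m + 1) g t)
        = ∑ m ∈ range n,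
            (n.choose (m + 1) : ℝ) * iteratedDeriv (n - m) f t * iteratedDeriv (m + 1) g t := by
      rw [Finset.sum_range_succ]
      simp
    rw [Finset.sum_congr rfl (fun (m : ℕ) _ => by ring :
      ∀ m ∈ range (n + 1), ((n.choose m : ℝ) + (n.choose (m + 1) : ℝ))
          * iteratedDeriv (n - m) f t * iteratedDeriv (m + 1) g t
        = (n.choose m : ℝ) * iteratedDeriv (n - m) f t * iteratedDeriv (m + 1) g t
          + (n.choose (m + 1) : ℝ) * iteratedDeriv (n - m) f t * iteratedDeriv (m + 1) g t),
      Finset.sum_add_distrib, hA, hA']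
    ring

/-- Coefficients of the expanded Jacobi equation. -/
noncomputable def coeff (k : ℕ) (P : ℕ → ℝ → ℝ) (j : ℕ) (t : ℝ) : ℝ :=
  ∑ l ∈ range (k + 1), ∑ m ∈ range (l + 1),
    if m + l = j then (-1 : ℝ) ^ l * (l.choose m) * iteratedDeriv (l - m) (P l) t else 0

private lemma coeff_continuous (k : ℕ) (P : ℕ → ℝ → ℝ)
    (hP : ∀ l, l ≤ k → ContDiff ℝ ∞ (P l)) (j : ℕ) : Continuous (coeff k P j) := by
  apply continuous_finset_sum
  intro l hl
  apply continuous_finset_sum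
  intro m _
  split_ifs with h
  · exact (continuous_const.mul
      ((hP l (by simpa using Nat.lt_succ_iff.mp (Finset.mem_range.mp hl))).continuous_iteratedDeriv
        (l - m) (le_of_lt (nat_lt_infty _))))
  · exact continuous_const

private lemma coeff_top (k : ℕ) (P : ℕ → ℝ → ℝ) (t : ℝ) :
    coeff k P (2 * k) t = (-1 : ℝ) ^ k * P k t := by
  unfold coeff
  rw [Finset.sum_eq_single k]
  · rw [Finset.sum_eq_single k]
    · rw [if_pos (by omega)]
      simp
    · intro m hm hmk
      rw [if_neg (by have := Finset.mem_range.mp hm; omega)]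
    · intro h; exact absurd (Finset.self_mem_range_succ k) h
  · intro l hl hlk
    apply Finset.sum_eq_zero
    intro m hm
    rw [if_neg (by
      have h1 := Finset.mem_range.mp hl
      have h2 := Finset.mem_range.mp hm
      omega)]
  · intro h; exact absurd (Finset.self_mem_range_succ k) h

private lemma expanded (k : ℕ) (P : ℕ → ℝ → ℝ) (a b : ℝ) (h : ℝ → ℝ)
    (hP : ∀ l, l ≤ k → ContDiff ℝ ∞ (P l)) (hsol : IsJacobiSolution1D k P a b h) :
    ∀ t ∈ Set.Icc a b,
      ∑ j ∈ range (2 * k + 1), coeff k P j t * iteratedDeriv j h t = 0 := by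
  intro t ht
  have hh : ContDiff ℝ ∞ h := hsol.1.of_le (by simp)
  calc ∑ j ∈ range (2 * k + 1), coeff k P j t * iteratedDeriv j h t
      = ∑ j ∈ range (2 * k + 1), ∑ l ∈ range (k + 1), ∑ m ∈ range (l + 1),
          (if m + l = j then ((-1 : ℝ) ^ l * (l.choose m) * iteratedDeriv (l - m) (P l) t)
              * iteratedDeriv j h t else 0) := by
        unfold coeff
        simp only [Finset.sum_mul, ite_mul, zero_mul]
    _ = ∑ l ∈ range (k + 1), ∑ m ∈ range (l + 1), ∑ j ∈ range (2 * k + 1),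
          (if m + l = j then ((-1 : ℝ) ^ l * (l.choose m) * iteratedDeriv (l - m) (P l) t)
              * iteratedDeriv j h t else 0) := by
        rw [Finset.sum_comm]
        exact Finset.sum_congr rfl fun l _ => Finset.sum_comm
    _ = ∑ l ∈ range (k + 1), ∑ m ∈ range (l + 1),
          ((-1 : ℝ) ^ l * (l.choose m) * iteratedDeriv (l - m) (P l) t)
            * iteratedDeriv (m + l) h t := by
        refine Finset.sum_congr rfl fun l hl => Finset.sum_congr rfl fun m hm => ?_
        rw [Finset.sum_ite_eq (range (2 * k + 1)) (m + l)
          (fun j => ((-1 : ℝ) ^ l * (l.choose m) * iteratedDeriv (l - m) (P l) t)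
            * iteratedDeriv j h t), if_pos]
        rw [Finset.mem_range] at *
        omega
    _ = ∑ l ∈ range (k + 1),
          (-1 : ℝ) ^ l * iteratedDeriv l (fun s => P l s * iteratedDeriv l h s) t := by
        refine Finset.sum_congr rfl fun l hl => ?_
        rw [leibniz (hP l (by have := Finset.mem_range.mp hl; omega)) (contDiff_itd hh l) l t,
          Finset.mul_sum]
        refine Finset.sum_congr rfl fun m hm => ?_
        rw [itd_comp]
        ring
    _ = 0 := hsol.2 t ht

/-- Normalized coefficients of the Jacobi ODE in explicit form. -/
noncomputable def qcoef (k : ℕ) (P : ℕ → ℝ → ℝ) (j : ℕ) (t : ℝ) : ℝ :=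
  - coeff k P j t / ((-1 : ℝ) ^ k * P k t)

open Classical in
/-- First-order vector field for the Jacobi ODE. -/
noncomputable def vf (k : ℕ) (P : ℕ → ℝ → ℝ) (a b : ℝ) (t : ℝ)
    (x : Fin (2 * k) → ℝ) : Fin (2 * k) → ℝ :=
  fun i => if t ∈ Set.Icc a b then
    (if hi : (i : ℕ) + 1 < 2 * k then x ⟨(i : ℕ) + 1, hi⟩
      else ∑ j : Fin (2 * k), qcoef k P (j : ℕ) t * x j)
  else 0

private lemma vf_linear {k : ℕ} (P : ℕ → ℝ → ℝ) (a b t : ℝ) {ι : Type*} [Fintype ι]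
    (c : ι → ℝ) (w : ι → Fin (2 * k) → ℝ) :
    vf k P a b t (∑ i, c i • w i) = ∑ i, c i • vf k P a b t (w i) := by
  funext i0
  simp only [vf, Finset.sum_apply, Pi.smul_apply, smul_eq_mul]
  split_ifs with ht hi
  · simp [Finset.sum_apply]
  · simp only [Finset.sum_apply, Pi.smul_apply, smul_eq_mul, Finset.mul_sum]
    rw [Finset.sum_comm]
    exact Finset.sum_congr rfl fun j _ => Finset.sum_congr rfl fun i _ => by ring
  · simp

private lemma vf_zero {k : ℕ} (P : ℕ → ℝ → ℝ) (a b t : ℝ) :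
    vf k P a b t 0 = 0 := by
  funext i
  simp only [vf]
  split_ifs <;> simp

private lemma key (k : ℕ) (hk : 1 ≤ k) (a b : ℝ) (P : ℕ → ℝ → ℝ)
    (hPsmooth : ∀ l, l ≤ k → ContDiff ℝ ∞ (P l))
    (hPk : ∀ t ∈ Set.Icc a b, 0 < P k t)
    (σ : Fin (2 * k) → ℝ → ℝ)
    (hσsol : ∀ i, IsJacobiSolution1D k P a b (σ i))
    (hσli : LinearIndependent ℝ fun i => (Set.Icc a b).restrict (σ i))
    (t₀ : ℝ) (ht₀ : t₀ ∈ Set.Icc a b) :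
    LinearIndependent ℝ
      (fun i : Fin (2 * k) => fun j : Fin (2 * k) => iteratedDeriv (j : ℕ) (σ i) t₀) := by
  have hD : ∀ t ∈ Set.Icc a b, ((-1 : ℝ) ^ k * P k t) ≠ 0 := fun t ht =>
    mul_ne_zero (pow_ne_zero _ (by norm_num)) (ne_of_gt (hPk t ht))
  have hqcont : ∀ j : ℕ, ContinuousOn (qcoef k P j) (Set.Icc a b) := by
    intro j
    apply ContinuousOn.div
    · exact ((coeff_continuous k P hPsmooth j).neg).continuousOn
    · exact (continuous_const.mul ((hPsmooth k le_rfl).continuous)).continuousOn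
    · exact hD
  -- the ODE in explicit form
  have hODE : ∀ i, ∀ t ∈ Set.Icc a b, iteratedDeriv (2 * k) (σ i) t
      = ∑ j ∈ range (2 * k), qcoef k P j t * iteratedDeriv j (σ i) t := by
    intro i t ht
    have E := expanded k P a b (σ i) hPsmooth (hσsol i) t ht
    rw [Finset.sum_range_succ, coeff_top] at E
    have hsum : ∑ j ∈ range (2 * k), qcoef k P j t * iteratedDeriv j (σ i) t
        = (∑ j ∈ range (2 * k), -(coeff k P j t * iteratedDeriv j (σ i) t))
            / ((-1 : ℝ) ^ k * P k t) := by
      rw [Finset.sum_div]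
      exact Finset.sum_congr rfl fun j _ => by rw [qcoef]; ring
    rw [hsum, Finset.sum_neg_distrib]
    have E2 : ∑ j ∈ range (2 * k), coeff k P j t * iteratedDeriv j (σ i) t
        = -((-1 : ℝ) ^ k * P k t * iteratedDeriv (2 * k) (σ i) t) := by linarith
    rw [E2, neg_neg]
    exact (mul_div_cancel_left₀ _ (hD t ht)).symm
  -- Lipschitz bound
  obtain ⟨C, hC⟩ := (isCompact_Icc (a := a) (b := b)).exists_bound_of_continuousOn
    (continuousOn_finset_sum (range (2 * k)) (fun j _ => (hqcont j).abs) :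
      ContinuousOn (fun t => ∑ j ∈ range (2 * k), |qcoef k P j t|) (Set.Icc a b))
  set K : NNReal := Real.toNNReal (max 1 C) with hKdef
  have hKcoe : (K : ℝ) = max 1 C := Real.coe_toNNReal _ (le_trans zero_le_one (le_max_left 1 C))
  have hK1 : (1 : ℝ) ≤ K := by rw [hKcoe]; exact le_max_left 1 C
  have hKC : C ≤ (K : ℝ) := by rw [hKcoe]; exact le_max_right 1 C
  have hv : ∀ t, LipschitzOnWith K (vf k P a b t) Set.univ := by
    intro t
    apply LipschitzWith.lipschitzOnWith
    by_cases ht : t ∈ Set.Icc a b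
    · rw [lipschitzWith_iff_dist_le_mul]
      intro x y
      rw [dist_pi_le_iff (by positivity)]
      intro i
      simp only [vf, if_pos ht]
      split_ifs with hi
      · exact le_trans (dist_le_pi_dist x y _)
          (le_mul_of_one_le_left dist_nonneg hK1)
      · have hb1 : dist (∑ j : Fin (2 * k), qcoef k P (j : ℕ) t * x j)
            (∑ j : Fin (2 * k), qcoef k P (j : ℕ) t * y j)
            ≤ (∑ j : Fin (2 * k), |qcoef k P (j : ℕ) t|) * dist x y := by
          rw [Real.dist_eq, ← Finset.sum_sub_distrib, Finset.sum_mul]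
          refine le_trans (Finset.abs_sum_le_sum_abs _ _) (Finset.sum_le_sum fun j _ => ?_)
          rw [← mul_sub, abs_mul]
          exact mul_le_mul_of_nonneg_left
            (by rw [← Real.dist_eq]; exact dist_le_pi_dist x y j) (abs_nonneg _)
        refine le_trans hb1 (mul_le_mul_of_nonneg_right ?_ dist_nonneg)
        rw [show (∑ j : Fin (2 * k), |qcoef k P (j : ℕ) t|)
            = ∑ j ∈ range (2 * k), |qcoef k P j t| from
          Fin.sum_univ_eq_sum_range (fun j => |qcoef k P j t|) (2 * k)]
        exact le_trans (le_trans (le_abs_self _) (hC t ht)) hKC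
    · have : vf k P a b t = fun _ => (0 : Fin (2 * k) → ℝ) := by
        funext x i; simp [vf, ht]
      rw [this]
      exact (LipschitzWith.const _).weaken (zero_le : 0 ≤ K)
  -- trajectories
  set Y : Fin (2 * k) → ℝ → Fin (2 * k) → ℝ :=
    fun i t j => iteratedDeriv (j : ℕ) (σ i) t with hYdef
  have hYderiv : ∀ i t, HasDerivAt (Y i)
      (fun j : Fin (2 * k) => iteratedDeriv ((j : ℕ) + 1) (σ i) t) t := by
    intro i t
    apply hasDerivAt_pi.mpr
    intro j
    have hd := ((hσsol i).1.of_le (by simp)).differentiable_iteratedDeriv (j : ℕ)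
      (nat_lt_infty _)
    have := (hd t).hasDerivAt
    rw [iteratedDeriv_succ]
    exact (hd t).hasDerivAt
  have hYode : ∀ i, ∀ t ∈ Set.Icc a b,
      (fun j : Fin (2 * k) => iteratedDeriv ((j : ℕ) + 1) (σ i) t) = vf k P a b t (Y i t) := by
    intro i t ht
    funext j
    simp only [vf, if_pos ht]
    split_ifs with hj
    · rfl
    · have hj2 : (j : ℕ) + 1 = 2 * k := by have := j.isLt; omega
      rw [hj2, hODE i t ht]
      exact (Fin.sum_univ_eq_sum_range
        (fun j' => qcoef k P j' t * iteratedDeriv j' (σ i) t) (2 * k)).symm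
  -- linear independence
  rw [Fintype.linearIndependent_iff]
  intro c hc
  set Z : ℝ → Fin (2 * k) → ℝ := fun t => ∑ i, c i • Y i t with hZdef
  have hZt₀ : Z t₀ = 0 := hc
  have hZderiv : ∀ t, HasDerivAt Z
      (∑ i, c i • fun j : Fin (2 * k) => iteratedDeriv ((j : ℕ) + 1) (σ i) t) t :=
    fun t => HasDerivAt.fun_sum fun i _ => (hYderiv i t).const_smul (c i)
  have hZode : ∀ t ∈ Set.Icc a b, HasDerivAt Z (vf k P a b t (Z t)) t := by
    intro t ht
    have h1 := hZderiv t
    have h2 : (∑ i, c i • fun j : Fin (2 * k) => iteratedDeriv ((j : ℕ) + 1) (σ i) t)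
        = vf k P a b t (Z t) := by
      rw [Finset.sum_congr rfl fun i _ => by rw [hYode i t ht]]
      exact (vf_linear P a b t c (fun i => Y i t)).symm
    rwa [h2] at h1
  have hZcont : Continuous Z := continuous_iff_continuousAt.mpr fun t =>
    (hZderiv t).continuousAt
  have h0deriv : ∀ (t : ℝ) (s : Set ℝ),
      HasDerivWithinAt (fun _ : ℝ => (0 : Fin (2 * k) → ℝ)) (vf k P a b t 0) s t := by
    intro t s
    rw [vf_zero]
    exact (hasDerivAt_const t _).hasDerivWithinAt
  have hZ0 : ∀ t ∈ Set.Icc a b, Z t = 0 := by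
    intro t ht
    rcases le_total t t₀ with htle | htle
    · have := ODE_solution_unique_of_mem_Icc_left (v := vf k P a b)
        (s := fun _ => Set.univ) (K := K) (fun t _ => hv t) (a := t) (b := t₀)
        (hZcont.continuousOn)
        (fun s hs => (hZode s ⟨le_trans ht.1 (le_of_lt hs.1), le_trans hs.2 ht₀.2⟩).hasDerivWithinAt)
        (fun _ _ => Set.mem_univ _)
        continuousOn_const
        (fun s hs => h0deriv s _)
        (fun _ _ => Set.mem_univ _)
        hZt₀
      exact this ⟨le_refl t, htle⟩
    · have := ODE_solution_unique_of_mem_Icc_right (v := vf k P a b)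
        (s := fun _ => Set.univ) (K := K) (fun t _ => hv t) (a := t₀) (b := t)
        (hZcont.continuousOn)
        (fun s hs => (hZode s ⟨le_trans ht₀.1 hs.1, le_trans (le_of_lt hs.2) ht.2⟩).hasDerivWithinAt)
        (fun _ _ => Set.mem_univ _)
        continuousOn_const
        (fun s hs => h0deriv s _)
        (fun _ _ => Set.mem_univ _)
        hZt₀
      exact this ⟨htle, le_refl t⟩
  -- conclude using linear independence of restrictions
  revert hc
  intro _
  have hres : ∑ i, c i • (Set.Icc a b).restrict (σ i) = 0 := by
    funext ⟨t, ht⟩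
    have hz := congrFun (hZ0 t ht) ⟨0, by omega⟩
    simp [hZdef, hYdef, Finset.sum_apply, iteratedDeriv_zero] at hz
    rw [Finset.sum_apply]
    exact hz
  exact Fintype.linearIndependent_iff.mp hσli c hres

/-- for `2k` linearly independent solutions `σ_i` of the Jacobi equation,
the `2k × (k+1)` matrix `(σ_i^{(j)}(t))`, `0 ≤ j ≤ k`, has rank exactly `k+1`;
consequently the Jacobi curve `ℓ(t)` (span of the columns of the `2k × k` frame
`𝒜(t) = (σ_i^{(j-1)}(t))`) has rank one, the rank of the curve being
`rank(𝒜(t) | 𝒜'(t)) − k`. -/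
theorem statement_16 (k : ℕ) (hk : 1 ≤ k) (a b : ℝ) (hab : a < b)
    (P : ℕ → ℝ → ℝ) (hPsmooth : ∀ l, l ≤ k → ContDiff ℝ (⊤ : ℕ∞) (P l))
    (hPk : ∀ t ∈ Set.Icc a b, 0 < P k t)
    (σ : Fin (2 * k) → ℝ → ℝ)
    (hσsol : ∀ i, IsJacobiSolution1D k P a b (σ i))
    (hσli : LinearIndependent ℝ fun i => (Set.Icc a b).restrict (σ i)) :
    ∀ t ∈ Set.Icc a b,
      (Matrix.rank (Matrix.of fun (i : Fin (2 * k)) (j : Fin (k + 1)) =>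
          iteratedDeriv (j : ℕ) (σ i) t) = k + 1) ∧
      (Matrix.rank (Matrix.of fun (i : Fin (2 * k)) (q : Fin k ⊕ Fin k) =>
          Sum.elim (fun j : Fin k => iteratedDeriv (j : ℕ) (σ i) t)
            (fun j : Fin k => iteratedDeriv ((j : ℕ) + 1) (σ i) t) q) - k = 1) := by
  intro t ht
  have hPinf : ∀ l, l ≤ k → ContDiff ℝ ∞ (P l) := fun l hl => (hPsmooth l hl).of_le (by simp)
  have hli := key k hk a b P hPinf hPk σ hσsol hσli t ht
  set M : Matrix (Fin (2 * k)) (Fin (2 * k)) ℝ :=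
    Matrix.of (fun i j => iteratedDeriv (j : ℕ) (σ i) t) with hM
  have hunit : IsUnit M := Matrix.linearIndependent_rows_iff_isUnit.mp hli
  have hcols : LinearIndependent ℝ (fun j => Mᵀ j) :=
    Matrix.linearIndependent_cols_iff_isUnit.mpr hunit
  set N : Matrix (Fin (2 * k)) (Fin (k + 1)) ℝ :=
    Matrix.of (fun i (j : Fin (k + 1)) => iteratedDeriv (j : ℕ) (σ i) t) with hN
  set emb : Fin (k + 1) → Fin (2 * k) := fun j => ⟨(j : ℕ), by have := j.isLt; omega⟩ with hemb
  have hembinj : Function.Injective emb := by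
    intro x y h
    have h2 : ((emb x : Fin (2 * k)) : ℕ) = ((emb y : Fin (2 * k)) : ℕ) := congrArg Fin.val h
    exact Fin.ext h2
  have hNT : Nᵀ = Mᵀ ∘ emb := by funext j i; rfl
  have h1 : N.rank = k + 1 := by
    rw [Matrix.rank_eq_finrank_span_cols, show N.col = Nᵀ from rfl, hNT]
    have := finrank_span_eq_card (hcols.comp emb hembinj)
    simpa [Function.comp] using this
  refine ⟨h1, ?_⟩
  set B : Matrix (Fin (2 * k)) (Fin k ⊕ Fin k) ℝ :=
    Matrix.of (fun i (q : Fin k ⊕ Fin k) =>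
      Sum.elim (fun j : Fin k => iteratedDeriv (j : ℕ) (σ i) t)
        (fun j : Fin k => iteratedDeriv ((j : ℕ) + 1) (σ i) t) q) with hB
  have hBrange : Set.range Bᵀ = Set.range Nᵀ := by
    ext v
    constructor
    · rintro ⟨q, rfl⟩
      cases q with
      | inl j => exact ⟨⟨(j : ℕ), by have := j.isLt; omega⟩, rfl⟩
      | inr j => exact ⟨⟨(j : ℕ) + 1, by have := j.isLt; omega⟩, rfl⟩
    · rintro ⟨j, rfl⟩
      by_cases hj : (j : ℕ) < k
      · exact ⟨Sum.inl ⟨(j : ℕ), hj⟩, rfl⟩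
      · have hjk : (j : ℕ) = k := by have := j.isLt; omega
        refine ⟨Sum.inr ⟨k - 1, by omega⟩, ?_⟩
        funext i
        show iteratedDeriv (k - 1 + 1) (σ i) t = iteratedDeriv (j : ℕ) (σ i) t
        have he : k - 1 + 1 = (j : ℕ) := by omega
        rw [he]
  have h2 : B.rank = k + 1 := by
    rw [Matrix.rank_eq_finrank_span_cols, show B.col = Bᵀ from rfl, hBrange, ← show N.col = Nᵀ from rfl,
      ← Matrix.rank_eq_finrank_span_cols, h1]
  rw [h2]
  omega
end

section
/- Let V = ℝ^N, let ρ : I → M_N(ℝ) be a differentiable curve of idempotent matrices (ρ(t)² = ρ(t) for all t), and let 𝒜 : I → M_{N×k}(ℝ) be a differentiable curve of matrices such that for each t the columns of 𝒜(t) are linearly independent and span the image of ρ(t). Then for every t ∈ I, the rank of the N × 2k juxtaposed matrix (𝒜(t) | 𝒜'(t)) equals k + rank(ρ'(t) 𝒜(t)); in particular the rank of the curve ℓ(t) = column span of 𝒜(t) in the Grassmannian Gr(k, N) (defined as the rank of its derivative viewed in Hom(ℓ(t), V/ℓ(t))) equals rank(𝒜(t) | 𝒜'(t)) − k. -/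
open Matrix

/-- let `ρ(t)` be a differentiable curve of idempotent matrices whose
image is spanned by the (linearly independent) columns of a differentiable `N × k`
frame `𝒜(t)`. Then `rank (𝒜(t) | 𝒜'(t)) = k + rank (ρ'(t) 𝒜(t))`; in particular the
rank of the curve `ℓ(t) = span of the columns of 𝒜(t)` in `Gr(k, N)` — represented by
the homomorphism induced by `ρ'(t)` — equals `rank (𝒜(t) | 𝒜'(t)) − k`. -/
theorem statement_17 (N k : ℕ) (hk : 1 ≤ k) (I : Set ℝ) (hI : I.OrdConnected)
    (hne : ∃ x ∈ I, ∃ y ∈ I, x < y)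
    (ρ ρ' : ℝ → Matrix (Fin N) (Fin N) ℝ)
    (hρderiv : ∀ t ∈ I, ∀ i j, HasDerivAt (fun s => ρ s i j) (ρ' t i j) t)
    (hidem : ∀ t ∈ I, ρ t * ρ t = ρ t)
    (A A' : ℝ → Matrix (Fin N) (Fin k) ℝ)
    (hAderiv : ∀ t ∈ I, ∀ i c, HasDerivAt (fun s => A s i c) (A' t i c) t)
    (hli : ∀ t ∈ I, LinearIndependent ℝ (A t)ᵀ)
    (hspan : ∀ t ∈ I,
      Submodule.span ℝ (Set.range (A t)ᵀ) = LinearMap.range (Matrix.mulVecLin (ρ t))) :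
    ∀ t ∈ I,
      (Matrix.fromCols (A t) (A' t)).rank = k + (ρ' t * A t).rank ∧
      (Matrix.fromCols (A t) (A' t)).rank - k = (ρ' t * A t).rank := by
  intro t ht
  obtain ⟨x, hx, y, hy, hxy⟩ := hne
  have hconv : Convex ℝ I := hI.convex
  have hud : UniqueDiffWithinAt ℝ I t := by
    apply uniqueDiffWithinAt_convex hconv
    · obtain ⟨z, hz⟩ := Set.nonempty_Ioo.2 hxy
      exact ⟨z, interior_maximal ((Set.Ioo_subset_Icc_self).trans (hI.out hx hy))
        isOpen_Ioo hz⟩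
    · exact subset_closure ht
  -- a function vanishing on `I` has derivative `0` at `t`
  have key : ∀ (f : ℝ → ℝ) (d : ℝ), HasDerivAt f d t → (∀ s ∈ I, f s = 0) → d = 0 := by
    intro f d hf h0
    have h1 : derivWithin f I t = d := hf.hasDerivWithinAt.derivWithin hud
    have h2 : HasDerivWithinAt f 0 I t :=
      (hasDerivWithinAt_const t I (0 : ℝ)).congr h0 (h0 t ht)
    rw [← h1, h2.derivWithin hud]
  -- ρ acts as identity on the columns of A
  have hρA : ∀ s ∈ I, ρ s * A s = A s := by
    intro s hs
    ext i c
    have hcol : (A s)ᵀ c ∈ LinearMap.range (ρ s).mulVecLin := by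
      rw [← hspan s hs]
      exact Submodule.subset_span ⟨c, rfl⟩
    obtain ⟨v, hv⟩ := hcol
    have hfix : (ρ s) *ᵥ ((A s)ᵀ c) = (A s)ᵀ c := by
      rw [← hv, mulVecLin_apply, mulVec_mulVec, hidem s hs]
    have : (ρ s * A s) i c = ((ρ s) *ᵥ ((A s)ᵀ c)) i := by
      simp [Matrix.mul_apply, Matrix.mulVec, dotProduct, Matrix.transpose_apply]
    rw [this, hfix]
    rfl
  -- differentiate ρ A = A
  have hder1 : ρ' t * A t + ρ t * A' t = A' t := by
    ext i c
    have hf : HasDerivAt (fun s => (∑ j, ρ s i j * A s j c) - A s i c)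
        ((∑ j, (ρ' t i j * A t j c + ρ t i j * A' t j c)) - A' t i c) t := by
      exact (HasDerivAt.fun_sum fun j _ => (hρderiv t ht i j).mul (hAderiv t ht j c)).sub
        (hAderiv t ht i c)
    have h0 : ∀ s ∈ I, (∑ j, ρ s i j * A s j c) - A s i c = 0 := by
      intro s hs
      have := congrFun (congrFun (hρA s hs) i) c
      rw [Matrix.mul_apply] at this
      rw [this, sub_self]
    have hz := key _ _ hf h0
    have : (∑ j, (ρ' t i j * A t j c + ρ t i j * A' t j c)) = A' t i c := by
      linarith
    simpa [Matrix.add_apply, Matrix.mul_apply, Finset.sum_add_distrib] using this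
  -- differentiate ρ ρ = ρ
  have hder2 : ρ' t * ρ t + ρ t * ρ' t = ρ' t := by
    ext i c
    have hf : HasDerivAt (fun s => (∑ j, ρ s i j * ρ s j c) - ρ s i c)
        ((∑ j, (ρ' t i j * ρ t j c + ρ t i j * ρ' t j c)) - ρ' t i c) t := by
      exact (HasDerivAt.fun_sum fun j _ => (hρderiv t ht i j).mul (hρderiv t ht j c)).sub
        (hρderiv t ht i c)
    have h0 : ∀ s ∈ I, (∑ j, ρ s i j * ρ s j c) - ρ s i c = 0 := by
      intro s hs
      have := congrFun (congrFun (hidem s hs) i) c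
      rw [Matrix.mul_apply] at this
      rw [this, sub_self]
    have hz := key _ _ hf h0
    have h1 : (∑ j, (ρ' t i j * ρ t j c + ρ t i j * ρ' t j c)) = ρ' t i c := by
      linarith
    have h2 : (∑ j, ρ' t i j * ρ t j c) + (∑ j, ρ t i j * ρ' t j c) = ρ' t i c := by
      rw [← Finset.sum_add_distrib]; exact h1
    simpa [Matrix.add_apply, Matrix.mul_apply] using h2
  -- ρ ρ' ρ = 0
  have h3 : ρ t * ρ' t * ρ t = 0 := by
    have h := congrArg (fun M => M * ρ t) hder2
    simp only [add_mul] at h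
    rw [mul_assoc (ρ' t), hidem t ht] at h
    -- h : ρ' t * ρ t + ρ t * ρ' t * ρ t = ρ' t * ρ t
    rwa [add_eq_left] at h
  -- ρ (ρ' A) = 0
  have hρB : ρ t * (ρ' t * A t) = 0 := by
    conv_lhs => rw [← hρA t ht]
    rw [← Matrix.mul_assoc, ← Matrix.mul_assoc, h3, Matrix.zero_mul]
  -- ranges
  set RA := LinearMap.range (A t).mulVecLin with hRAdef
  set RB := LinearMap.range (ρ' t * A t).mulVecLin with hRBdef
  set RA' := LinearMap.range (A' t).mulVecLin with hRA'def
  have hRAρ : RA = LinearMap.range (ρ t).mulVecLin := by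
    rw [hRAdef, Matrix.range_mulVecLin]; exact hspan t ht
  have hsplit : LinearMap.range (fromCols (A t) (A' t)).mulVecLin = RA ⊔ RA' := by
    apply le_antisymm
    · rintro _ ⟨v, rfl⟩
      have hv : v = Sum.elim (v ∘ Sum.inl) (v ∘ Sum.inr) := by
        ext (i | i) <;> rfl
      rw [mulVecLin_apply, hv, fromCols_mulVec_sumElim]
      exact Submodule.add_mem_sup ⟨_, rfl⟩ ⟨_, rfl⟩
    · rw [sup_le_iff]
      constructor <;> rintro _ ⟨v, rfl⟩
      · exact ⟨Sum.elim v 0, by simp [mulVecLin_apply]⟩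
      · exact ⟨Sum.elim 0 v, by simp [mulVecLin_apply]⟩
  have hsup : RA ⊔ RA' = RA ⊔ RB := by
    apply le_antisymm
    · rw [sup_le_iff]
      refine ⟨le_sup_left, ?_⟩
      rintro _ ⟨v, rfl⟩
      have : (A' t) *ᵥ v = (ρ' t * A t) *ᵥ v + (ρ t) *ᵥ ((A' t) *ᵥ v) := by
        rw [mulVec_mulVec, ← add_mulVec, hder1]
      rw [mulVecLin_apply, this]
      refine Submodule.add_mem _ (Submodule.mem_sup_right ⟨v, rfl⟩) ?_
      exact Submodule.mem_sup_left (hRAρ ▸ ⟨(A' t) *ᵥ v, rfl⟩)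
    · rw [sup_le_iff]
      refine ⟨le_sup_left, ?_⟩
      rintro _ ⟨v, rfl⟩
      have : (ρ' t * A t) *ᵥ v = (A' t) *ᵥ v - (ρ t) *ᵥ ((A' t) *ᵥ v) := by
        rw [mulVec_mulVec]
        rw [eq_sub_iff_add_eq, ← add_mulVec, hder1]
      rw [mulVecLin_apply, this]
      refine Submodule.sub_mem _ (Submodule.mem_sup_right ⟨v, rfl⟩) ?_
      exact Submodule.mem_sup_left (hRAρ ▸ ⟨(A' t) *ᵥ v, rfl⟩)
  have hdisj : RA ⊓ RB = ⊥ := by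
    rw [eq_bot_iff]
    rintro w ⟨hwA, hwB⟩
    obtain ⟨u, hu⟩ := hRAρ ▸ hwA
    obtain ⟨v, hv⟩ := hwB
    have h1 : (ρ t) *ᵥ w = 0 := by
      rw [← hv, mulVecLin_apply, mulVec_mulVec, hρB, zero_mulVec]
    have h2 : (ρ t) *ᵥ w = w := by
      rw [← hu, mulVecLin_apply, mulVec_mulVec, hidem t ht]
    rw [h2] at h1
    simpa using h1
  have hrkA : Module.finrank ℝ RA = k := by
    rw [hRAdef, Matrix.range_mulVecLin]
    exact (finrank_span_eq_card (hli t ht)).trans (Fintype.card_fin k)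
  have hfin : Module.finrank ℝ (RA ⊔ RB : Submodule ℝ (Fin N → ℝ))
      = k + (ρ' t * A t).rank := by
    have hh := Submodule.finrank_sup_add_finrank_inf_eq RA RB
    rw [hdisj, finrank_bot] at hh
    have : (ρ' t * A t).rank = Module.finrank ℝ RB := rfl
    omega
  have hmain : (fromCols (A t) (A' t)).rank = k + (ρ' t * A t).rank := by
    show Module.finrank ℝ (LinearMap.range (fromCols (A t) (A' t)).mulVecLin) = _
    rw [hsplit, hsup, hfin]
  exact ⟨hmain, by omega⟩
end
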